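/- arXiv:1112.4548 — 9 statements merged into one kernel-verified Lean document; each statement's English description precedes it below -/
import Mathlib

section
/- Let D be a squarefree integer, u a positive integer, and let S be the set of numbers r + s√D with r, s nonzero integers, gcd(r, sD) = 1 and u | s. Let p be an odd prime and suppose t is the least positive integer such that p^t or -p^t is the norm of an element of S. If p^n or -p^n is also the norm of an element of S for a positive integer n, then t divides n. -/
/-!
If `a + b√D` has norm `±p^n` and `c + d√D` has norm `±p^t` with `0 < t ≤ n`, then `p^t` divides
`(ad + bc)(bc - ad)`, and `p` cannot divide both factors since it divides neither `2`, `a` nor `d`.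
So for a suitable sign `e = ±d`, `p^t` divides `ae + bc`, which forces the whole product
`(a + b√D)(c + e√D)` to be divisible by `p^t`. The quotient has norm `±p^(n-t)` and inherits
`gcd(r, sD) = 1` and `u ∣ s`. Thus the exponents `k > 0` with `±p^k` a norm from `S` are closed
under subtraction, and the least one divides all others.
-/

/-- `±p^k` is expressible as the norm of an element `r + s√D` with `r, s ≠ 0`,
`gcd(r, sD) = 1` and `u ∣ s`. -/
def NormExpr (D : ℤ) (u : ℕ) (p k : ℕ) : Prop :=
  ∃ r s : ℤ, r ≠ 0 ∧ s ≠ 0 ∧ Int.gcd r (s * D) = 1 ∧ (u : ℤ) ∣ s ∧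
    (r ^ 2 - D * s ^ 2 = (p : ℤ) ^ k ∨ r ^ 2 - D * s ^ 2 = -((p : ℤ) ^ k))

theorem normExpr_iff {D : ℤ} {u p k : ℕ} :
    NormExpr D u p k ↔ ∃ r s : ℤ, r ≠ 0 ∧ s ≠ 0 ∧ IsCoprime r (s * D) ∧ (u : ℤ) ∣ s ∧
      Associated (r ^ 2 - D * s ^ 2) ((p : ℤ) ^ k) := by
  simp only [NormExpr, Int.isCoprime_iff_gcd_eq_one, Int.associated_iff]

theorem not_dvd_of_dvd_sq_sub_mul_sq {P a b D : ℤ} (hP : Prime P) (hab : IsCoprime a (b * D))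
    (h : P ∣ a ^ 2 - D * b ^ 2) : ¬ P ∣ a ∧ ¬ P ∣ b * D := by
  have not_both : ¬ (P ∣ a ∧ P ∣ b * D) := fun ⟨ha, hbD⟩ =>
    hP.not_isUnit (hab.isUnit_of_dvd' ha hbD)
  have dvd_iff : P ∣ a ↔ P ∣ b * D := by
    have hsq : P ∣ a ^ 2 ↔ P ∣ (b * D) * b := by
      rw [show (b * D) * b = a ^ 2 - (a ^ 2 - D * b ^ 2) by ring, dvd_sub_left h]
    rw [← hP.dvd_pow_iff_dvd two_ne_zero, hsq, hP.dvd_mul, or_iff_left_of_imp (·.mul_right D)]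
  tauto

theorem exists_sq_eq_sq_and_pow_dvd_mul_add_mul {P a b c d D : ℤ} {t : ℕ} (hP : Prime P)
    (h2 : ¬ P ∣ 2) (ha : ¬ P ∣ a) (hd : ¬ P ∣ d)
    (hab : P ^ t ∣ a ^ 2 - D * b ^ 2) (hcd : P ^ t ∣ c ^ 2 - D * d ^ 2) :
    ∃ e, e ^ 2 = d ^ 2 ∧ P ^ t ∣ a * e + b * c := by
  have hprod : P ^ t ∣ (a * d + b * c) * (a * -d + b * c) := by
    rw [show (a * d + b * c) * (a * -d + b * c) =
      b ^ 2 * (c ^ 2 - D * d ^ 2) - d ^ 2 * (a ^ 2 - D * b ^ 2) by ring]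
    exact dvd_sub (hcd.mul_left _) (hab.mul_left _)
  by_cases h : P ∣ a * d + b * c
  · refine ⟨d, rfl, hP.pow_dvd_of_dvd_mul_right t (fun h' => ?_) hprod⟩
    have h2ad : ¬ P ∣ 2 * a * d := by simp only [hP.dvd_mul, not_or]; exact ⟨⟨h2, ha⟩, hd⟩
    exact h2ad (by simpa only [show a * d + b * c - (a * -d + b * c) = 2 * a * d by ring]
      using dvd_sub h h')
  · exact ⟨-d, neg_sq d, hP.pow_dvd_of_dvd_mul_left t h hprod⟩

theorem exists_eq_pow_mul_of_associated_pow {P A B D : ℤ} {m t : ℕ} (hP : P ≠ 0)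
    (hB : P ^ t ∣ B) (hN : Associated (A ^ 2 - D * B ^ 2) (P ^ (2 * t + m))) :
    ∃ A' B', A = P ^ t * A' ∧ B = P ^ t * B' ∧ Associated (A' ^ 2 - D * B' ^ 2) (P ^ m) := by
  obtain ⟨B', rfl⟩ := hB
  have hA : P ^ t ∣ A := by
    rw [← Int.pow_dvd_pow_iff two_ne_zero,
      show A ^ 2 = (A ^ 2 - D * (P ^ t * B') ^ 2) + (P ^ t) ^ 2 * (D * B' ^ 2) by ring]
    refine dvd_add ?_ (dvd_mul_right _ _)
    rw [hN.dvd_iff_dvd_right, ← pow_mul, pow_add]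
    exact dvd_mul_of_dvd_left (by rw [mul_comm]) _
  obtain ⟨A', rfl⟩ := hA
  refine ⟨A', B', rfl, rfl, ?_⟩
  rw [pow_add, show (P ^ t * A') ^ 2 - D * (P ^ t * B') ^ 2 =
    P ^ (2 * t) * (A' ^ 2 - D * B' ^ 2) by ring] at hN
  exact hN.of_mul_left (Associated.refl _) (pow_ne_zero _ hP)

theorem IsCoprime.of_eq_add_mul {R : Type*} [CommRing R] {x y X Y α β γ δ : R}
    (h : IsCoprime x y) (hx : x = α * X + β * Y) (hy : y = γ * X + δ * Y) : IsCoprime X Y := by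
  obtain ⟨m, n, h⟩ := h
  exact ⟨m * α + n * γ, m * β + n * δ, by rw [← h, hx, hy]; ring⟩

theorem exists_isCoprime_associated_pow_sub {P a b c d D u : ℤ} {n t : ℕ} (hP : Prime P)
    (h2 : ¬ P ∣ 2) (ht : 0 < t) (htn : t ≤ n) (hab : IsCoprime a (b * D))
    (hcd : IsCoprime c (d * D)) (hub : u ∣ b) (hud : u ∣ d)
    (hNab : Associated (a ^ 2 - D * b ^ 2) (P ^ n))
    (hNcd : Associated (c ^ 2 - D * d ^ 2) (P ^ t)) :
    ∃ A B : ℤ, IsCoprime A (B * D) ∧ u ∣ B ∧ Associated (A ^ 2 - D * B ^ 2) (P ^ (n - t)) := by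
  obtain ⟨hPa, hPbD⟩ := not_dvd_of_dvd_sq_sub_mul_sq hP hab
    (hNab.dvd_iff_dvd_right.mpr (dvd_pow_self P (by omega)))
  obtain ⟨-, hPdD⟩ := not_dvd_of_dvd_sq_sub_mul_sq hP hcd
    (hNcd.dvd_iff_dvd_right.mpr (dvd_pow_self P ht.ne'))
  obtain ⟨e, he, hPe⟩ := exists_sq_eq_sq_and_pow_dvd_mul_add_mul hP h2 hPa
    (fun h => hPdD (h.mul_right D)) (hNab.dvd_iff_dvd_right.mpr (pow_dvd_pow P htn))
    (hNcd.dvd_iff_dvd_right.mpr dvd_rfl)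
  have hNce : Associated (c ^ 2 - D * e ^ 2) (P ^ t) := by rwa [he]
  have hN : Associated ((a * c + D * b * e) ^ 2 - D * (a * e + b * c) ^ 2)
      (P ^ (2 * t + (n - t))) := by
    rw [show 2 * t + (n - t) = n + t by omega, pow_add, show (a * c + D * b * e) ^ 2 -
      D * (a * e + b * c) ^ 2 = (a ^ 2 - D * b ^ 2) * (c ^ 2 - D * e ^ 2) by ring]
    exact hNab.mul_mul hNce
  obtain ⟨A, B, hA, hB, hNAB⟩ := exists_eq_pow_mul_of_associated_pow hP.ne_zero hPe hN
  obtain ⟨ε, hε⟩ := hNce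
  -- multiplying `A + B√D` back by `c - e√D` recovers `a + b√D` up to the unit `ε`
  have hPt : P ^ t ≠ 0 := pow_ne_zero t hP.ne_zero
  have ha : a = ε * c * A + (-ε * e) * (B * D) :=
    mul_left_cancel₀ hPt (by linear_combination (-a) * hε + (ε * c) * hA - (ε * D * e) * hB)
  have hbD : b * D = (-ε * e * D) * A + ε * c * (B * D) :=
    mul_left_cancel₀ hPt
      (by linear_combination (-b * D) * hε + (ε * c * D) * hB - (ε * e * D) * hA)
  have hue : u ∣ e := (Int.pow_dvd_pow_iff two_ne_zero).mp (he ▸ pow_dvd_pow_of_dvd hud 2)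
  have huP : IsCoprime u (P ^ t) :=
    ((hP.coprime_iff_not_dvd.mpr fun h => hPbD ((h.trans hub).mul_right D)).symm).pow_right
  refine ⟨A, B, hab.of_eq_add_mul ha hbD, huP.dvd_of_dvd_mul_left ?_, hNAB⟩
  exact hB ▸ dvd_add (hue.mul_left a) (hub.mul_right c)

theorem NormExpr.sub {D : ℤ} {u p n t : ℕ} (hp : p.Prime) (hodd : Odd p) (ht : 0 < t)
    (htn : t < n) (hnex : NormExpr D u p n) (htex : NormExpr D u p t) :
    NormExpr D u p (n - t) := by
  rw [normExpr_iff] at *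
  obtain ⟨a, b, -, -, hab, hub, hNab⟩ := hnex
  obtain ⟨c, d, -, -, hcd, hud, hNcd⟩ := htex
  have hP : Prime (p : ℤ) := Nat.prime_iff_prime_int.mp hp
  have h2 : ¬ (p : ℤ) ∣ 2 := fun h => hodd.ne_two_of_dvd_nat dvd_rfl
    ((Nat.prime_dvd_prime_iff_eq hp Nat.prime_two).mp (by exact_mod_cast h))
  obtain ⟨A, B, hAB, huB, hNAB⟩ :=
    exists_isCoprime_associated_pow_sub hP h2 ht htn.le hab hcd hub hud hNab hNcd
  obtain ⟨hPA, hPBD⟩ := not_dvd_of_dvd_sq_sub_mul_sq hP hAB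
    (hNAB.dvd_iff_dvd_right.mpr (dvd_pow_self _ (by omega)))
  exact ⟨A, B, fun h => hPA (h ▸ dvd_zero _), fun h => hPBD (by simp [h]), hAB, huB, hNAB⟩

theorem least_norm_exponent_divides_general (D : ℤ) (u : ℕ)
    (p : ℕ) (hp : p.Prime) (hodd : Odd p) (t n : ℕ) (ht : 0 < t)
    (htex : NormExpr D u p t) (hleast : ∀ m : ℕ, 0 < m → NormExpr D u p m → t ≤ m)
    (hnex : NormExpr D u p n) : t ∣ n := by
  induction n using Nat.strong_induction_on with
  | _ n ih =>
    obtain rfl | hn := n.eq_zero_or_pos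
    · exact dvd_zero t
    obtain htn | htn := (hleast n hn hnex).eq_or_lt
    · exact htn ▸ dvd_rfl
    · exact (Nat.dvd_sub_iff_left htn.le dvd_rfl).mp
        (ih (n - t) (by omega) (hnex.sub hp hodd ht htn htex))

theorem least_norm_exponent_divides (D : ℤ) (hD : Squarefree D) (u : ℕ) (hu : 0 < u)
    (p : ℕ) (hp : p.Prime) (hodd : Odd p) (t n : ℕ) (ht : 0 < t)
    (htex : NormExpr D u p t) (hleast : ∀ m : ℕ, 0 < m → NormExpr D u p m → t ≤ m)
    (hn : 0 < n) (hnex : NormExpr D u p n) : t ∣ n :=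
  least_norm_exponent_divides_general D u p hp hodd t n ht htex hleast hnex
end

section
/- If D is a positive integer congruent to 2 modulo 4, m is an integer, and r > 1 is an integer with (1 + √(-D))^r = m + √(-D) or (1 + √(-D))^r = m - √(-D), then D = 2 and r = 3. -/
namespace ZsqrtdPM

def A (D : ℕ) (n : ℕ) : ℤ := ((⟨1, 1⟩ : ℤ√(-(D:ℤ))) ^ n).re
def B (D : ℕ) (n : ℕ) : ℤ := ((⟨1, 1⟩ : ℤ√(-(D:ℤ))) ^ n).im

lemma A_zero (D : ℕ) : A D 0 = 1 := rfl
lemma B_zero (D : ℕ) : B D 0 = 0 := rfl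
lemma A_one (D : ℕ) : A D 1 = 1 := by simp [A]
lemma B_one (D : ℕ) : B D 1 = 1 := by simp [B]

lemma A_add (D s t : ℕ) :
    A D (s + t) = A D s * A D t - (D:ℤ) * (B D s * B D t) := by
  simp only [A, B, pow_add, Zsqrtd.re_mul]
  ring

lemma B_add (D s t : ℕ) :
    B D (s + t) = A D s * B D t + B D s * A D t := by
  simp only [A, B, pow_add, Zsqrtd.im_mul]

lemma A_succ (D n : ℕ) : A D (n + 1) = A D n - (D:ℤ) * B D n := by
  rw [A_add, A_one, B_one]; ring

lemma B_succ (D n : ℕ) : B D (n + 1) = A D n + B D n := by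
  rw [B_add, A_one, B_one]; ring

lemma normAB (D n : ℕ) : A D n ^ 2 + (D:ℤ) * B D n ^ 2 = (1 + (D:ℤ)) ^ n := by
  induction n with
  | zero => simp [A_zero, B_zero]
  | succ n ih =>
    rw [A_succ, B_succ, pow_succ (1+(D:ℤ)) n, ← ih]; ring

lemma modD (D n : ℕ) : (D:ℤ) ∣ A D n - 1 ∧ (D:ℤ) ∣ B D n - n := by
  induction n with
  | zero => simp [A_zero, B_zero]
  | succ n ih =>
    obtain ⟨h1, h2⟩ := ih
    constructor
    · rw [A_succ]
      have e : A D n - (D:ℤ) * B D n - 1 = (A D n - 1) - D * B D n := by ring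
      rw [e]
      exact dvd_sub h1 (Dvd.intro _ rfl)
    · rw [B_succ]
      push_cast
      have e : A D n + B D n - ((n:ℤ) + 1) = (A D n - 1) + (B D n - n) := by ring
      rw [e]
      exact dvd_add h1 h2

def stA : ℕ → ZMod 4
  | 0 => 1 | 1 => 1 | 2 => 3 | _ => 3
def stB : ℕ → ZMod 4
  | 0 => 0 | 1 => 1 | 2 => 2 | _ => 1

lemma mod4 (D : ℕ) (hD : D % 4 = 2) (n : ℕ) :
    ((A D n : ℤ) : ZMod 4) = stA (n % 4) ∧ ((B D n : ℤ) : ZMod 4) = stB (n % 4) := by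
  have hD4 : ((D:ℕ) : ZMod 4) = 2 := by
    rw [← ZMod.natCast_mod, hD]; rfl
  induction n with
  | zero => rw [A_zero, B_zero]; constructor <;> simp [stA, stB]
  | succ n ih =>
    obtain ⟨ih1, ih2⟩ := ih
    have hA : ((A D (n+1) : ℤ) : ZMod 4) = stA (n % 4) - 2 * stB (n % 4) := by
      rw [A_succ]; push_cast [hD4, ih1, ih2]; ring
    have hB : ((B D (n+1) : ℤ) : ZMod 4) = stA (n % 4) + stB (n % 4) := by
      rw [B_succ]; push_cast [ih1, ih2]; ring
    have h4 : n % 4 = 0 ∨ n % 4 = 1 ∨ n % 4 = 2 ∨ n % 4 = 3 := by omega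
    rcases h4 with h | h | h | h <;>
      · have h1 : (n+1) % 4 = (n % 4 + 1) % 4 := by omega
        rw [h] at hA hB
        rw [h1, h]
        exact ⟨hA.trans (by decide), hB.trans (by decide)⟩


lemma B_ne_neg_one (D r : ℕ) (hD : D % 4 = 2) : B D r ≠ -1 := by
  intro h
  have h2 := (mod4 D hD r).2
  rw [h] at h2
  have h4 : r % 4 = 0 ∨ r % 4 = 1 ∨ r % 4 = 2 ∨ r % 4 = 3 := by omega
  rcases h4 with h' | h' | h' | h' <;> rw [h'] at h2 <;> exact absurd h2 (by decide)

lemma r_mod4 (D r : ℕ) (hD : D % 4 = 2) (h : B D r = 1) : r % 4 = 1 ∨ r % 4 = 3 := by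
  have h2 := (mod4 D hD r).2
  rw [h] at h2
  have h4 : r % 4 = 0 ∨ r % 4 = 1 ∨ r % 4 = 2 ∨ r % 4 = 3 := by omega
  rcases h4 with h' | h' | h' | h'
  · rw [h'] at h2; exact absurd h2 (by decide)
  · exact Or.inl h'
  · rw [h'] at h2; exact absurd h2 (by decide)
  · exact Or.inr h'

lemma A_mod4 (D n : ℕ) (hD : D % 4 = 2) (h4 : 4 ∣ n) : (4:ℤ) ∣ A D n - 1 := by
  have h1 := (mod4 D hD n).1
  have h0 : n % 4 = 0 := Nat.eq_zero_of_dvd_of_lt h4 |> fun _ => Nat.mod_eq_zero_of_dvd h4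
  rw [h0] at h1
  have : ((A D n - 1 : ℤ) : ZMod 4) = 0 := by push_cast [h1]; decide
  exact (ZMod.intCast_zmod_eq_zero_iff_dvd _ 4).mp this


lemma binom (D t k : ℕ) :
    ∃ y z : ℤ,
      A D ((k+3) * t) = A D t ^ (k+3)
        - ((k+3).choose 2 : ℤ) * A D t ^ (k+1) * D * B D t ^ 2
        + (D:ℤ)^2 * B D t ^ 4 * y
      ∧ B D ((k+3) * t) = B D t * (((k:ℤ)+3) * A D t ^ (k+2)
        - ((k+3).choose 3 : ℤ) * A D t ^ k * D * B D t ^ 2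
        + (D:ℤ)^2 * B D t ^ 4 * z) := by
  induction k with
  | zero =>
    refine ⟨0, 0, ?_, ?_⟩
    · have h3 : (0+3) * t = (t + t) + t := by ring
      rw [h3, A_add, A_add, B_add]
      norm_num [Nat.choose]
      ring
    · have h3 : (0+3) * t = (t + t) + t := by ring
      rw [h3, B_add, A_add, B_add]
      norm_num [Nat.choose]
      ring
  | succ k ih =>
    obtain ⟨y, z, hA, hB⟩ := ih
    have h4 : (k+1+3) * t = (k+3) * t + t := by ring
    have c2 : ((k+4).choose 2 : ℤ) = ((k+3).choose 2 : ℤ) + (k+3) := by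
      rw [show k+4 = (k+3)+1 from rfl, Nat.choose_succ_succ (k+3) 1, Nat.choose_one_right]
      push_cast; ring
    have c3 : ((k+4).choose 3 : ℤ) = ((k+3).choose 3 : ℤ) + ((k+3).choose 2 : ℤ) := by
      rw [show k+4 = (k+3)+1 from rfl, Nat.choose_succ_succ (k+3) 2]
      push_cast; ring
    refine ⟨y * A D t + ((k+3).choose 3 : ℤ) * A D t ^ k - (D:ℤ) * B D t ^ 2 * z,
            y + z * A D t, ?_, ?_⟩
    · rw [h4, A_add, hA, hB, show k+1+3 = k+4 from rfl, c2]
      push_cast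
      ring
    · rw [h4, B_add, hA, hB, show k+1+3 = k+4 from rfl, c3]
      push_cast
      ring


lemma A_not_dvd (D : ℕ) (p : ℕ) (hp : p.Prime) (hpD : p ∣ D) (t : ℕ) :
    ¬ (p:ℤ) ∣ A D t := by
  intro hd
  have h1 : (p:ℤ) ∣ A D t - 1 := dvd_trans (Int.natCast_dvd_natCast.mpr hpD) (modD D t).1
  have : (p:ℤ) ∣ 1 := by
    have := dvd_sub hd h1
    simpa using this
  exact hp.one_lt.ne' (by exact_mod_cast Int.eq_one_of_dvd_one (by positivity) this)

lemma Bp (D p : ℕ) (hp : p.Prime) (hp2 : p ≠ 2) (hpD : p ∣ D)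
    (hcond : 5 ≤ p ∨ (p = 3 ∧ (9 ∣ D ∨ D = 6))) (t : ℕ) :
    ∃ c : ℤ, B D (p * t) = B D t * c ∧ (p:ℤ) ∣ c ∧ ¬ (p:ℤ)^2 ∣ c := by
  have hp3 : 3 ≤ p := by
    have := hp.two_le; omega
  obtain ⟨y, z, hA, hB⟩ := binom D t (p - 3)
  have hpk : p - 3 + 3 = p := by omega
  rw [hpk] at hA hB
  set a := A D t with ha
  set b := B D t with hb
  have hpDz : (p:ℤ) ∣ (D:ℤ) := Int.natCast_dvd_natCast.mpr hpD
  obtain ⟨dq, edq⟩ := hpDz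
  have hcast : ((p-3:ℕ):ℤ) + 3 = (p:ℤ) := by
    have h := hpk
    omega
  refine ⟨(((p-3:ℕ):ℤ) + 3) * a ^ (p-3+2) - (p.choose 3 : ℤ) * a ^ (p-3) * (D:ℤ) * b ^ 2
      + (D:ℤ)^2 * b ^ 4 * z, hB, ?_, ?_⟩
  · refine dvd_add (dvd_sub ?_ ?_) ?_
    · rw [hcast]; exact Dvd.intro _ rfl
    · exact ⟨(p.choose 3 : ℤ) * a ^ (p-3) * dq * b ^ 2, by rw [edq]; ring⟩
    · exact ⟨(p:ℤ) * dq^2 * b ^ 4 * z, by rw [edq]; ring⟩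
  · intro hc
    have hpa : ¬ (p:ℤ) ∣ a := A_not_dvd D p hp hpD t
    have hpZ : ((p:ℤ)) ≠ 0 := by exact_mod_cast hp.ne_zero
    have h2 : (p:ℤ)^2 ∣ (D:ℤ)^2 * b ^ 4 * z := ⟨dq^2 * b ^ 4 * z, by rw [edq]; ring⟩
    have main : (p:ℤ)^2 ∣ (p.choose 3 : ℤ) * a ^ (p-3) * (D:ℤ) * b ^ 2 → False := by
      intro h1
      obtain ⟨wc, ec⟩ := hc
      rw [hcast] at ec
      obtain ⟨w1, e1⟩ := h1
      obtain ⟨w2, e2⟩ := h2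
      have h3 : (p:ℤ) * a ^ (p-3+2) = (p:ℤ) * ((p:ℤ) * (wc + w1 - w2)) := by
        linear_combination ec + e1 - e2
      have h4 : (p:ℤ) ∣ a ^ (p-3+2) := ⟨_, mul_left_cancel₀ hpZ h3⟩
      exact hpa (Int.Prime.dvd_pow' (by exact_mod_cast hp) h4)
    rcases hcond with h5 | ⟨hp3', hD9⟩
    · refine main ?_
      have hch : (p:ℤ) ∣ (p.choose 3 : ℤ) :=
        Int.natCast_dvd_natCast.mpr (hp.dvd_choose_self (by norm_num) (by omega))
      obtain ⟨cq, ecq⟩ := hch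
      exact ⟨cq * a ^ (p-3) * dq * b ^ 2, by rw [ecq, edq]; ring⟩
    · rcases hD9 with hD9 | hD6
      · refine main ?_
        have h9 : (p:ℤ)^2 ∣ (D:ℤ) := by
          rw [hp3']
          have : ((9:ℕ):ℤ) ∣ (D:ℤ) := Int.natCast_dvd_natCast.mpr hD9
          norm_num at this ⊢
          exact this
        obtain ⟨dq9, edq9⟩ := h9
        exact ⟨(p.choose 3 : ℤ) * a ^ (p-3) * dq9 * b ^ 2, by rw [edq9]; ring⟩
      · subst hp3'
        subst hD6
        norm_num at hc
        obtain ⟨s, es⟩ : (6:ℤ) ∣ a - 1 := (modD 6 t).1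
        have key : ∀ s b z : ZMod 9, 3*(6*s+1)^2 - 6*b^2 + 36*b^4*z ≠ 0 := by decide
        have ea : a = 6 * s + 1 := by omega
        have hc9 : ((3 * a^2 - 6*b^2 + 36*b^4*z : ℤ) : ZMod 9) = 0 :=
          (ZMod.intCast_zmod_eq_zero_iff_dvd _ 9).mpr (by exact_mod_cast hc)
        rw [ea] at hc9
        push_cast at hc9
        exact key s b z hc9


lemma geo (x : ℤ) (u : ℕ) : x - 1 ∣ x ^ u - 1 := by
  simpa using sub_dvd_pow_sub_pow x 1 u

section odd
variable (D p : ℕ) (hp : p.Prime) (hp2 : p ≠ 2) (hpD : p ∣ D)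
    (hcond : 5 ≤ p ∨ (p = 3 ∧ (9 ∣ D ∨ D = 6)))

include hp hp2 hpD hcond in
lemma Bdvd : ∀ k, ∀ n : ℕ, p^k ∣ n → (p:ℤ)^k ∣ B D n := by
  intro k
  induction k with
  | zero => intro n _; simpa using one_dvd _
  | succ k ih =>
    intro n hd
    obtain ⟨u, rfl⟩ : ∃ u, n = p * (p^k * u) := by
      obtain ⟨u, rfl⟩ := hd
      exact ⟨u, by ring⟩
    obtain ⟨c, hc, hpc, _⟩ := Bp D p hp hp2 hpD hcond (p^k * u)
    rw [hc]
    rw [pow_succ]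
    exact mul_dvd_mul (ih _ (Dvd.intro _ rfl)) hpc

include hp hp2 hpD hcond in
lemma Bexact : ∀ k, ∀ n : ℕ, 0 < n → p^k ∣ n → ¬ p^(k+1) ∣ n →
    ¬ (p:ℤ)^(k+1) ∣ B D n := by
  intro k
  induction k with
  | zero =>
    intro n hn _ hnd hdvd
    have h1 : (p:ℤ) ∣ B D n - n :=
      dvd_trans (Int.natCast_dvd_natCast.mpr hpD) (modD D n).2
    have h2 : (p:ℤ) ∣ (n:ℤ) := by
      have := dvd_sub (by simpa using hdvd) h1
      simpa using this
    exact hnd (by simpa using Int.natCast_dvd_natCast.mp h2)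
  | succ k ih =>
    intro n hn hd hnd
    obtain ⟨t, rfl⟩ : ∃ t, n = p * t := by
      obtain ⟨u, hu⟩ := hd
      exact ⟨p^k * u, by rw [hu]; ring⟩
    have hppos : 0 < p := hp.pos
    have ht : 0 < t := by
      rcases Nat.eq_zero_or_pos t with h | h
      · subst h; simp at hn
      · exact h
    have hkd : p^k ∣ t := by
      have h' : p * p^k ∣ p * t := by rw [← pow_succ']; exact hd
      exact (Nat.mul_dvd_mul_iff_left hppos).mp h'
    have hknd : ¬ p^(k+1) ∣ t := by
      intro hc
      apply hnd
      have : p * p^(k+1) ∣ p * t := Nat.mul_dvd_mul_left p hc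
      rwa [← pow_succ'] at this
    obtain ⟨c, hc, hpc, hpc2⟩ := Bp D p hp hp2 hpD hcond t
    intro hdvd
    obtain ⟨β, eβ⟩ := Bdvd D p hp hp2 hpD hcond k t hkd
    have hβ : ¬ (p:ℤ) ∣ β := by
      intro hh
      obtain ⟨w, ew⟩ := hh
      exact ih t ht hkd hknd ⟨w, by rw [eβ, ew, pow_succ]; ring⟩
    obtain ⟨γ, eγ⟩ := hpc
    have hγ : ¬ (p:ℤ) ∣ γ := by
      intro hh
      obtain ⟨w, ew⟩ := hh
      exact hpc2 ⟨w, by rw [eγ, ew]; ring⟩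
    rw [hc, eβ, eγ] at hdvd
    obtain ⟨w, ew⟩ := hdvd
    have hpZ : ((p:ℤ))^(k+1) ≠ 0 := by
      have : ((p:ℤ)) ≠ 0 := by exact_mod_cast hp.ne_zero
      positivity
    have h5 : (p:ℤ)^(k+1) * (β * γ) = (p:ℤ)^(k+1) * ((p:ℤ) * w) := by
      linear_combination ew
    have h6 : (p:ℤ) ∣ β * γ := ⟨w, mul_left_cancel₀ hpZ h5⟩
    rcases (Nat.prime_iff_prime_int.mp hp).dvd_mul.mp h6 with h | h
    · exact hβ h
    · exact hγ h
end odd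


lemma powAux (D p : ℕ) (hp : p.Prime) (hpD : p ∣ D) :
    ∀ k, (p:ℤ)^(k+1) ∣ (1 + (D:ℤ))^(p^k) - 1 := by
  intro k
  induction k with
  | zero =>
    simpa using dvd_trans (Int.natCast_dvd_natCast.mpr hpD) (by simp)
  | succ k ih =>
    have hx : (1 + (D:ℤ))^(p^(k+1)) = ((1 + (D:ℤ))^(p^k))^p := by
      rw [← pow_mul, pow_succ]
    set x := (1 + (D:ℤ))^(p^k) with hxdef
    have hS : x ^ p - 1 = (∑ i ∈ Finset.range p, x ^ i) * (x - 1) := (geom_sum_mul x p).symm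
    have hpx : (p:ℤ) ∣ x - 1 := dvd_trans (dvd_pow_self _ (Nat.succ_ne_zero k)) ih
    have hpS : (p:ℤ) ∣ ∑ i ∈ Finset.range p, x ^ i := by
      have h1 : (∑ i ∈ Finset.range p, x ^ i) - p = ∑ i ∈ Finset.range p, (x ^ i - 1) := by
        rw [Finset.sum_sub_distrib, Finset.sum_const, Finset.card_range]
        push_cast; ring
      have h2 : (p:ℤ) ∣ ∑ i ∈ Finset.range p, (x ^ i - 1) :=
        Finset.dvd_sum fun i _ => dvd_trans hpx (geo x i)
      have h3 : (p:ℤ) ∣ (∑ i ∈ Finset.range p, x ^ i) - p := by rw [h1]; exact h2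
      have := dvd_add h3 (dvd_refl (p:ℤ))
      simpa using this
    rw [hx, hS, pow_succ]
    have hfin := mul_dvd_mul hpS ih
    rwa [mul_comm ((p:ℤ)) ((p:ℤ)^(k+1))] at hfin

lemma pow_one_sub (D p : ℕ) (hp : p.Prime) (hpD : p ∣ D) (k n : ℕ) (hd : p^k ∣ n) :
    (p:ℤ)^(k+1) ∣ (1 + (D:ℤ))^n - 1 := by
  obtain ⟨u, rfl⟩ := hd
  rw [pow_mul]
  exact dvd_trans (powAux D p hp hpD k) (geo _ u)

lemma A_sub_one (D p : ℕ) (hp : p.Prime) (hp2 : p ≠ 2) (hpD : p ∣ D)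
    (hcond : 5 ≤ p ∨ (p = 3 ∧ (9 ∣ D ∨ D = 6))) (k n : ℕ) (hd : p^k ∣ n) :
    (p:ℤ)^(k+1) ∣ A D n - 1 := by
  obtain ⟨dq, edq⟩ : (p:ℤ) ∣ (D:ℤ) := Int.natCast_dvd_natCast.mpr hpD
  obtain ⟨β, eβ⟩ := Bdvd D p hp hp2 hpD hcond k n hd
  have h1 : (p:ℤ)^(k+1) ∣ (1 + (D:ℤ))^n - 1 := pow_one_sub D p hp hpD k n hd
  have h2 : (p:ℤ)^(k+1) ∣ (D:ℤ) * B D n ^ 2 :=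
    ⟨dq * β * B D n, by rw [edq, pow_succ]; nth_rewrite 2 [eβ]; ring⟩
  have h3 : (p:ℤ)^(k+1) ∣ (A D n - 1) * (A D n + 1) := by
    have e : (A D n - 1) * (A D n + 1) = ((1 + (D:ℤ))^n - 1) - (D:ℤ) * B D n ^ 2 := by
      have := normAB D n
      linear_combination this
    rw [e]
    exact dvd_sub h1 h2
  have h4 : ¬ (p:ℤ) ∣ A D n + 1 := by
    intro hdd
    have h5 : (p:ℤ) ∣ A D n - 1 := dvd_trans (Int.natCast_dvd_natCast.mpr hpD) (modD D n).1
    have h6 : (p:ℤ) ∣ 2 := by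
      have := dvd_sub hdd h5
      simpa using this
    have h7 : (p:ℤ) ≤ 2 := Int.le_of_dvd (by norm_num) h6
    have h8 : 2 ≤ p := hp.two_le
    have : p = 2 := by exact_mod_cast le_antisymm (by exact_mod_cast h7) h8
    exact hp2 this
  have hco : IsCoprime ((p:ℤ)^(k+1)) (A D n + 1) :=
    IsCoprime.pow_left (((Nat.prime_iff_prime_int.mp hp).coprime_iff_not_dvd).mpr h4)
  exact hco.dvd_of_dvd_mul_right h3

lemma oddContra (D p r : ℕ) (hp : p.Prime) (hp2 : p ≠ 2) (hpD : p ∣ D)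
    (hcond : 5 ≤ p ∨ (p = 3 ∧ (9 ∣ D ∨ D = 6)))
    (hr : 1 < r) (hB : B D r = 1) : False := by
  set n₀ := r - 1 with hn₀
  have hrn : r = n₀ + 1 := by omega
  have hn₀pos : 0 < n₀ := by omega
  set k := n₀.factorization p with hk
  have hk1 : p^k ∣ n₀ := Nat.ordProj_dvd n₀ p
  have hk2 : ¬ p^(k+1) ∣ n₀ := Nat.pow_succ_factorization_not_dvd (by omega) hp
  have hBr : B D r = A D n₀ + B D n₀ := by
    rw [hrn, B_add, A_one, B_one]; ring
  have hA1 : (p:ℤ)^(k+1) ∣ A D n₀ - 1 := A_sub_one D p hp hp2 hpD hcond k n₀ hk1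
  have hBn : (p:ℤ)^(k+1) ∣ B D n₀ := by
    have e : B D n₀ = -(A D n₀ - 1) := by
      rw [hB] at hBr
      linarith
    rw [e]
    exact hA1.neg_right
  exact Bexact D p hp hp2 hpD hcond k n₀ hn₀pos hk1 hk2 hBn


lemma A_odd (D n : ℕ) (hD : 2 ∣ D) : ¬ (2:ℤ) ∣ A D n := by
  intro h
  have h1 : (2:ℤ) ∣ A D n - 1 :=
    dvd_trans (Int.natCast_dvd_natCast.mpr hD) (modD D n).1
  have : (2:ℤ) ∣ 1 := by
    have := dvd_sub h h1
    simpa using this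
  norm_num at this

lemma B2exact (D : ℕ) (hD : 2 ∣ D) :
    ∀ k, ∀ n : ℕ, 0 < n → 2^k ∣ n → ¬ 2^(k+1) ∣ n →
      ((2:ℤ)^k ∣ B D n ∧ ¬ (2:ℤ)^(k+1) ∣ B D n) := by
  intro k
  induction k with
  | zero =>
    intro n hn _ hnd
    refine ⟨one_dvd _, ?_⟩
    intro h
    have h1 : (2:ℤ) ∣ B D n - n :=
      dvd_trans (Int.natCast_dvd_natCast.mpr hD) (modD D n).2
    have h2 : (2:ℤ) ∣ (n:ℤ) := by
      have := dvd_sub (by simpa using h) h1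
      simpa using this
    exact hnd (by simpa using Int.natCast_dvd_natCast.mp h2)
  | succ k ih =>
    intro n hn hd hnd
    obtain ⟨t, rfl⟩ : ∃ t, n = 2 * t := by
      obtain ⟨u, hu⟩ := hd
      exact ⟨2^k * u, by rw [hu]; ring⟩
    have ht : 0 < t := by omega
    have hkd : 2^k ∣ t := by
      have h' : 2 * 2^k ∣ 2 * t := by rw [← pow_succ']; exact hd
      exact (Nat.mul_dvd_mul_iff_left (by norm_num : 0 < 2)).mp h'
    have hknd : ¬ 2^(k+1) ∣ t := by
      intro hc
      apply hnd
      have : 2 * 2^(k+1) ∣ 2 * t := Nat.mul_dvd_mul_left 2 hc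
      rwa [← pow_succ'] at this
    have hBt := ih t ht hkd hknd
    have hB2 : B D (2 * t) = B D t * (2 * A D t) := by
      rw [two_mul, B_add]; ring
    obtain ⟨β, eβ⟩ := hBt.1
    have hβ : ¬ (2:ℤ) ∣ β := by
      intro hh
      obtain ⟨w, ew⟩ := hh
      exact hBt.2 ⟨w, by rw [eβ, ew, pow_succ]; ring⟩
    constructor
    · exact ⟨β * A D t, by rw [hB2, eβ, pow_succ]; ring⟩
    · intro h
      rw [hB2, eβ] at h
      obtain ⟨w, ew⟩ := h
      have h5 : (2:ℤ)^(k+1) * (β * A D t) = (2:ℤ)^(k+1) * (2 * w) := by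
        have : ((2:ℤ))^(k+1) = 2^k * 2 := by rw [pow_succ]
        linear_combination ew
      have h6 : (2:ℤ) ∣ β * A D t := ⟨w, mul_left_cancel₀ (by positivity) h5⟩
      rcases (Int.prime_two).dvd_mul.mp h6 with h | h
      · exact hβ h
      · exact A_odd D t hD h

lemma pow32 (D : ℕ) (hD : D = 2) :
    ∀ j, ∀ n : ℕ, 2^(j+2) ∣ n → (2:ℤ)^(j+4) ∣ 3^n - 1 := by
  intro j
  induction j with
  | zero =>
    intro n hd
    obtain ⟨u, rfl⟩ := hd
    rw [pow_mul]
    refine dvd_trans ?_ (geo ((3:ℤ)^(2^2)) u)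
    norm_num
  | succ j ih =>
    intro n hd
    obtain ⟨t, rfl⟩ : ∃ t, n = 2 * t := by
      obtain ⟨u, hu⟩ := hd
      exact ⟨2^(j+2) * u, by rw [hu]; ring⟩
    have hkd : 2^(j+2) ∣ t := by
      have h' : 2 * 2^(j+2) ∣ 2 * t := by rw [← pow_succ']; exact hd
      exact (Nat.mul_dvd_mul_iff_left (by norm_num : 0 < 2)).mp h'
    have e : (3:ℤ)^(2*t) - 1 = ((3:ℤ)^t - 1) * ((3:ℤ)^t + 1) := by
      rw [two_mul, pow_add]; ring
    rw [e]
    have h2 : (2:ℤ) ∣ (3:ℤ)^t + 1 := by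
      obtain ⟨w, hw⟩ := (Odd.pow (by decide : Odd (3:ℤ)) : Odd ((3:ℤ)^t))
      exact ⟨w + 1, by omega⟩
    rw [pow_succ]
    exact mul_dvd_mul (ih t hkd) h2

lemma coreA (n₀ k : ℕ) (h4 : 2^(k+2) ∣ n₀) (hBd : (2:ℤ)^(k+2) ∣ B 2 n₀) :
    (2:ℤ)^(k+3) ∣ A 2 n₀ - 1 := by
  have h3n : (2:ℤ)^(k+4) ∣ 3^n₀ - 1 := pow32 2 rfl k n₀ h4
  obtain ⟨β, eβ⟩ := hBd
  have h2B : (2:ℤ)^(k+4) ∣ 2 * B 2 n₀ ^ 2 :=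
    ⟨2^(k+1) * β^2, by rw [eβ]; ring⟩
  have hN : (2:ℤ)^(k+4) ∣ (A 2 n₀ - 1) * (A 2 n₀ + 1) := by
    have hnorm := normAB 2 n₀
    have e : (A 2 n₀ - 1) * (A 2 n₀ + 1) = ((3:ℤ)^n₀ - 1) - 2 * B 2 n₀ ^ 2 := by
      push_cast at hnorm
      linear_combination hnorm
    rw [e]
    exact dvd_sub h3n h2B
  obtain ⟨v, ev⟩ : (4:ℤ) ∣ A 2 n₀ - 1 :=
    A_mod4 2 n₀ (by norm_num) (dvd_trans ⟨2^k, by ring⟩ h4)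
  obtain ⟨w0, e0⟩ := hN
  have e1 : (2:ℤ) * ((A 2 n₀ - 1) * (2*v+1)) = 2 * ((2:ℤ)^(k+3) * w0) := by
    have eA : A 2 n₀ + 1 = 2 * (2*v+1) := by omega
    rw [← mul_assoc]
    calc (2:ℤ) * (A 2 n₀ - 1) * (2*v+1) = (A 2 n₀ - 1) * (2*(2*v+1)) := by ring
    _ = (A 2 n₀ - 1) * (A 2 n₀ + 1) := by rw [← eA]
    _ = 2^(k+4) * w0 := e0
    _ = 2 * ((2:ℤ)^(k+3) * w0) := by ring
  have e2 : (A 2 n₀ - 1) * (2*v+1) = (2:ℤ)^(k+3) * w0 :=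
    mul_left_cancel₀ (by norm_num) e1
  have hco : IsCoprime ((2:ℤ)^(k+3)) (2*v+1) := by
    refine IsCoprime.pow_left ?_
    rw [Int.prime_two.coprime_iff_not_dvd]
    intro ⟨w, hw⟩
    omega
  exact hco.dvd_of_dvd_mul_right ⟨w0, e2⟩

lemma d2Contra (r : ℕ) (hr : 1 < r) (hB : B 2 r = 1) : r = 3 := by
  have hmod := r_mod4 2 r (by norm_num) hB
  have hA3 : A 2 3 = -5 := by
    rw [show (3:ℕ) = 1+1+1 from rfl, A_succ, B_succ, A_succ, A_one, B_one]
    norm_num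
  have hB3 : B 2 3 = 1 := by
    rw [show (3:ℕ) = 1+1+1 from rfl, B_succ, B_succ, A_succ, A_one, B_one]
    norm_num
  have core : ∀ n₀ : ℕ, 0 < n₀ → 4 ∣ n₀ → ∃ k : ℕ,
      ((2:ℤ)^(k+1) ∣ A 2 n₀ - 1) ∧ ¬ ((2:ℤ)^(k+1) ∣ B 2 n₀) := by
    intro n₀ hpos h4
    set k := n₀.factorization 2 with hkdef
    have hk1 : 2^k ∣ n₀ := Nat.ordProj_dvd n₀ 2
    have hk2 : ¬ 2^(k+1) ∣ n₀ :=
      Nat.pow_succ_factorization_not_dvd (by omega) Nat.prime_two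
    have hkge : 2 ≤ k := by
      by_contra hlt
      exact hk2 (dvd_trans (pow_dvd_pow 2 (show k+1 ≤ 2 by omega)) h4)
    obtain ⟨j, hj⟩ : ∃ j, k = j + 2 := ⟨k - 2, by omega⟩
    have hBE := B2exact 2 (by norm_num) k n₀ hpos hk1 hk2
    refine ⟨k, ?_, hBE.2⟩
    have := coreA n₀ j (by rw [← hj]; exact hk1) (by rw [← hj]; exact hBE.1)
    have ee : j + 3 = k + 1 := by omega
    rwa [ee] at this
  rcases hmod with h1 | h3
  · exfalso
    have hr5 : 5 ≤ r := by omega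
    set n₀ := r - 1 with hn₀
    have hrn : r = n₀ + 1 := by omega
    obtain ⟨k, hA1, hB1⟩ := core n₀ (by omega) (by omega)
    apply hB1
    have hBr : B 2 r = A 2 n₀ + B 2 n₀ := by rw [hrn, B_add, A_one, B_one]; ring
    have : B 2 n₀ = -(A 2 n₀ - 1) := by rw [hB] at hBr; linarith
    rw [this]
    exact hA1.neg_right
  · by_contra hne
    have hr7 : 7 ≤ r := by omega
    set n₀ := r - 3 with hn₀
    have hrn : r = n₀ + 3 := by omega
    obtain ⟨k, hA1, hB1⟩ := core n₀ (by omega) (by omega)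
    apply hB1
    have hBr : B 2 r = A 2 n₀ * B 2 3 + B 2 n₀ * A 2 3 := by rw [hrn, B_add]
    rw [hA3, hB3, hB] at hBr
    have e5 : (5:ℤ) * B 2 n₀ = A 2 n₀ - 1 := by linarith
    have hco : IsCoprime ((2:ℤ)^(k+1)) (5:ℤ) := by
      refine IsCoprime.pow_left ?_
      rw [Int.prime_two.coprime_iff_not_dvd]
      norm_num
    refine hco.dvd_of_dvd_mul_left ?_
    rw [show (5:ℤ) * B 2 n₀ = B 2 n₀ * 5 from mul_comm _ _] at e5
    rw [← mul_comm (5:ℤ) (B 2 n₀)] at e5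
    rw [show (2:ℤ)^(k+1) ∣ 5 * B 2 n₀ ↔ (2:ℤ)^(k+1) ∣ A 2 n₀ - 1 from by rw [e5]]
    exact hA1


lemma choosePrime (D : ℕ) (hD2 : D % 4 = 2) (hne : D ≠ 2) :
    ∃ p, p.Prime ∧ p ≠ 2 ∧ p ∣ D ∧ (5 ≤ p ∨ (p = 3 ∧ (9 ∣ D ∨ D = 6))) := by
  have hD6 : 6 ≤ D := by omega
  by_cases hex : ∃ p, p.Prime ∧ 5 ≤ p ∧ p ∣ D
  · obtain ⟨p, hp, h5, hd⟩ := hex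
    exact ⟨p, hp, by omega, hd, Or.inl h5⟩
  · push_neg at hex
    set m := D / 2 with hmdef
    have hm : D = 2 * m := by omega
    have hmodd : m % 2 = 1 := by omega
    have hm3 : 3 ≤ m := by omega
    have hmD : m ∣ D := ⟨2, by omega⟩
    have smallFac : ∀ x : ℕ, x ∣ m → x ≠ 1 → 3 ∣ x := by
      intro x hx hx1
      have hxne : x ≠ 0 := by
        intro h0
        subst h0
        simp at hx
        omega
      have hq := Nat.minFac_prime hx1
      have hqd : x.minFac ∣ x := Nat.minFac_dvd x
      have hqm : x.minFac ∣ m := hqd.trans hx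
      have hq2 : x.minFac ≠ 2 := by
        intro h2
        rw [h2] at hqm
        omega
      have hq5 : x.minFac < 5 := by
        by_contra hge
        exact hex _ hq (by omega) (hqm.trans hmD)
      have hq3 : x.minFac = 3 := by
        have h2le := hq.two_le
        interval_cases h : x.minFac
        · exact absurd rfl hq2
        · rfl
        · exact absurd hq (by decide)
      exact hq3 ▸ hqd
  -- ...
    have h3m : 3 ∣ m := smallFac m dvd_rfl (by omega)
    refine ⟨3, by norm_num, by norm_num, h3m.trans hmD, Or.inr ⟨rfl, ?_⟩⟩
    by_cases h9 : 9 ∣ D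
    · exact Or.inl h9
    · right
      obtain ⟨m', hm'⟩ := h3m
      have hm'1 : m' = 1 := by
        by_contra hne1
        have h3m' : 3 ∣ m' := smallFac m' ⟨3, by omega⟩ hne1
        obtain ⟨m'', hm''⟩ := h3m'
        exact h9 ⟨2 * m'', by omega⟩
      omega


end ZsqrtdPM

theorem zsqrtd_power_eq_m_pm_sqrt (D : ℕ) (hD : 0 < D) (hD2 : D % 4 = 2) (m : ℤ)
    (r : ℕ) (hr : 1 < r)
    (h : (⟨1, 1⟩ : ℤ√(-(D : ℤ))) ^ r = ⟨m, 1⟩ ∨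
         (⟨1, 1⟩ : ℤ√(-(D : ℤ))) ^ r = ⟨m, -1⟩) :
    D = 2 ∧ r = 3 := by
  have hB : ZsqrtdPM.B D r = 1 ∨ ZsqrtdPM.B D r = -1 := by
    rcases h with h' | h'
    · left; unfold ZsqrtdPM.B; rw [h']
    · right; unfold ZsqrtdPM.B; rw [h']
  have hB1 : ZsqrtdPM.B D r = 1 := by
    rcases hB with h' | h'
    · exact h'
    · exact absurd h' (ZsqrtdPM.B_ne_neg_one D r hD2)
  have hDeq : D = 2 := by
    by_contra hne
    obtain ⟨p, hp, hp2, hpD, hcond⟩ := ZsqrtdPM.choosePrime D hD2 hne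
    exact ZsqrtdPM.oddContra D p r hp hp2 hpD hcond hr hB1
  subst hDeq
  exact ⟨rfl, ZsqrtdPM.d2Contra r hr hB1⟩
end

section
/- The equation z^2 = w^r + ε1·w^s + ε2, with ε1, ε2 ∈ {1, -1}, has no solutions in positive integers z, w, r, s with r > s, r even, and w > 2. -/
private def Uf (p : ℤ) : ℕ → ℤ
  | 0 => 0
  | 1 => 1
  | (n+2) => 2*p*Uf p (n+1) - Uf p n

private lemma Uf_zero (p : ℤ) : Uf p 0 = 0 := rfl
private lemma Uf_one (p : ℤ) : Uf p 1 = 1 := rfl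
private lemma Uf_add_two (p : ℤ) (n : ℕ) : Uf p (n+2) = 2*p*Uf p (n+1) - Uf p n := rfl

private def Wf (p : ℤ) (n : ℕ) : ℤ := Uf p (n+1) - p * Uf p n

private lemma two_step {P : ℕ → Prop} (h0 : P 0) (h1 : P 1)
    (ih : ∀ n, P n → P (n+1) → P (n+2)) : ∀ n, P n := by
  have key : ∀ n, P n ∧ P (n+1) := by
    intro n
    induction n with
    | zero => exact ⟨h0, h1⟩
    | succ k hk => exact ⟨hk.2, ih k hk.1 hk.2⟩
  exact fun n => (key n).1

private lemma Wf_zero (p : ℤ) : Wf p 0 = 1 := by simp [Wf, Uf_zero, Uf_one]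

private lemma Wf_one (p : ℤ) : Wf p 1 = p := by
  simp only [Wf]
  rw [Uf_add_two, Uf_one, Uf_zero]; ring

private lemma Wf_add_two (p : ℤ) (n : ℕ) : Wf p (n+2) = 2*p*Wf p (n+1) - Wf p n := by
  simp only [Wf]
  rw [Uf_add_two p (n+1), Uf_add_two p n]; ring

private lemma Uf_addf (p : ℤ) (n : ℕ) : ∀ m, Uf p (m+n) = Uf p m * Wf p n + Wf p m * Uf p n := by
  refine two_step ?_ ?_ ?_
  · rw [Uf_zero, Wf_zero, Nat.zero_add]; ring
  · rw [Uf_one, Wf_one]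
    simp only [Wf]
    rw [Nat.add_comm 1 n]; ring
  · intro m h1 h2
    have e : m + 2 + n = (m + n) + 2 := by omega
    rw [e, Uf_add_two]
    have e2 : m + n + 1 = (m+1) + n := by omega
    rw [e2, h1, h2, Uf_add_two, Wf_add_two]; ring

private lemma Uf_double (p : ℤ) (n : ℕ) : Uf p (2*n) = 2 * Uf p n * Wf p n := by
  have := Uf_addf p n n
  rw [two_mul, this]; ring

private lemma Uf_parity (p : ℤ) : ∀ n : ℕ, (2:ℤ) ∣ (Uf p n - n) := by
  refine two_step ?_ ?_ ?_
  · simp [Uf_zero]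
  · simp [Uf_one]
  · intro n h1 _
    have e : Uf p (n+2) - ((n+2:ℕ):ℤ) = 2*(p * Uf p (n+1) - 1 - n) - (Uf p n - n) := by
      rw [Uf_add_two]; push_cast; ring
    rw [e]
    exact dvd_sub (Dvd.intro _ rfl) h1

private lemma Wf_odd (p : ℤ) (hp : Odd p) : ∀ n, ¬ (2:ℤ) ∣ Wf p n := by
  have step : ∀ n, Wf p (n+1) + Wf p n = (p+1) * (Uf p (n+1) - Uf p n) := by
    intro n
    simp only [Wf]
    rw [Uf_add_two]; ring
  intro n
  induction n with
  | zero => rw [Wf_zero]; decide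
  | succ k hk =>
    intro h2
    apply hk
    have hpe : (2:ℤ) ∣ (p+1) := by
      obtain ⟨j, hj⟩ := hp; exact ⟨j+1, by omega⟩
    have : (2:ℤ) ∣ Wf p (k+1) + Wf p k := by
      rw [step]; exact Dvd.dvd.mul_right hpe _
    omega

private lemma Uf_growth (p : ℤ) (hp : 1 ≤ p) :
    ∀ n, (2*p-1)^n ≤ Uf p (n+1) ∧ Uf p n ≤ Uf p (n+1) := by
  intro n
  induction n with
  | zero => rw [Uf_zero, Uf_one]; norm_num
  | succ k hk =>
    obtain ⟨hg, hm⟩ := hk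
    have hUk1 : (0:ℤ) ≤ Uf p (k+1) := le_trans (pow_nonneg (by linarith) k) hg
    have key : (2*p-1) * Uf p (k+1) ≤ Uf p (k+2) := by
      rw [Uf_add_two]
      nlinarith
    constructor
    · calc (2*p-1)^(k+1) = (2*p-1) * (2*p-1)^k := by ring
        _ ≤ (2*p-1) * Uf p (k+1) := by nlinarith
        _ ≤ Uf p (k+2) := key
    · nlinarith

private lemma Uf_nonneg (p : ℤ) (hp : 1 ≤ p) (n : ℕ) : 0 ≤ Uf p n := by
  cases n with
  | zero => rw [Uf_zero]
  | succ k => exact le_trans (pow_nonneg (by linarith) k) (Uf_growth p hp k).1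

private lemma Uf_dvd_two_pow (p : ℤ) (hp : Odd p) :
    ∀ j : ℕ, ∀ n : ℕ, (2:ℤ)^j ∣ Uf p n → 2^j ∣ n := by
  intro j
  induction j with
  | zero => intro n _; simp
  | succ i ih =>
    intro n h
    have h2 : (2:ℤ) ∣ Uf p n := dvd_trans (dvd_pow_self 2 (Nat.succ_ne_zero i)) h
    have hn2 : 2 ∣ n := by
      have := Uf_parity p n
      have : (2:ℤ) ∣ (n:ℤ) := by omega
      exact_mod_cast this
    obtain ⟨n', rfl⟩ := hn2
    rw [Uf_double] at h
    have h3 : (2:ℤ)^i ∣ Uf p n' * Wf p n' := by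
      have : (2:ℤ)^(i+1) = 2 * 2^i := by ring
      rw [this] at h
      rcases h with ⟨c, hc⟩
      exact ⟨c, by linarith [mul_left_cancel₀ (two_ne_zero (α := ℤ)) (by linarith [hc] : (2:ℤ) * (Uf p n' * Wf p n') = 2 * (2^i * c))]⟩
    have h4 : (2:ℤ)^i ∣ Uf p n' :=
      Int.prime_two.pow_dvd_of_dvd_mul_left i (Wf_odd p hp n') (by rwa [mul_comm] at h3)
    have h5 := ih n' h4
    have : (2:ℕ)^(i+1) = 2^i * 2 := by ring
    rw [this, Nat.mul_comm 2 n']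
    exact mul_dvd_mul h5 (dvd_refl 2)

private lemma pell_neg (p : ℤ) (hp : 5 ≤ p) :
    ∀ (b : ℕ) (a : ℤ), 0 ≤ a → a^2 + 4 = (p^2-1)*(b:ℤ)^2 → False := by
  intro b
  induction b using Nat.strong_induction_on with
  | _ b ih =>
    intro a ha heq
    rcases Nat.lt_or_ge b 3 with hb | hb3
    · interval_cases b
      · push_cast at heq; nlinarith
      · -- b = 1 : a^2 = p^2 - 5
        push_cast at heq
        have h1 : a < p := by nlinarith
        have h2 : a ≤ p - 1 := by omega
        nlinarith
      · -- b = 2 : a^2 = 4p^2 - 8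
        push_cast at heq
        have hae : (2:ℤ) ∣ a := by
          have : (2:ℤ) ∣ a^2 := ⟨2*p^2 - 4, by linarith⟩
          exact Int.prime_two.dvd_of_dvd_pow this
        obtain ⟨a₀, rfl⟩ := hae
        have ha₀ : 0 ≤ a₀ := by linarith
        have h1 : a₀ < p := by nlinarith
        have h2 : a₀ ≤ p - 1 := by omega
        nlinarith
    · have hB : (3:ℤ) ≤ (b:ℤ) := by exact_mod_cast hb3
      set B : ℤ := (b:ℤ) with hBdef
      set D : ℤ := p^2 - 1 with hDdef
      have hD : (24:ℤ) ≤ D := by nlinarith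
      -- a ≤ p * B
      have hapB : a ≤ p * B := by
        by_contra hcon
        push_neg at hcon
        have h2 := mul_self_lt_mul_self (by positivity : (0:ℤ) ≤ p*B) hcon
        nlinarith [sq_nonneg B]
      -- b' = p*B - a ≥ 0, and b' < B
      have hb'nonneg : 0 ≤ p*B - a := by linarith
      have hb'lt : p*B - a < B := by
        by_contra hcon
        push_neg at hcon
        have hle : a ≤ (p-1)*B := by linarith
        have h2 := mul_self_le_mul_self ha hle
        nlinarith [mul_le_mul hB hB (by norm_num : (0:ℤ) ≤ 3) (by linarith : (0:ℤ) ≤ B)]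
      -- a' = p*a - D*B ≥ 0
      have ha' : 0 ≤ p*a - D*B := by
        by_contra hcon
        push_neg at hcon
        have h1 : 0 ≤ p*a := by positivity
        have h2 := mul_self_lt_mul_self h1 (by linarith : p*a < D*B)
        nlinarith [mul_le_mul hB hB (by norm_num : (0:ℤ) ≤ 3) (by linarith : (0:ℤ) ≤ B), sq_nonneg p]
      have heq' : (p*a - D*B)^2 + 4 = D * (p*B - a)^2 := by linear_combination heq
      set b' : ℕ := (p*B - a).toNat with hb'def
      have hb'cast : (b' : ℤ) = p*B - a := Int.toNat_of_nonneg hb'nonneg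
      have hb'ltb : b' < b := by omega
      exact ih b' hb'ltb (p*a - D*B) ha' (by rw [hb'cast]; linarith [heq'])

private lemma pell_pos (p : ℤ) (hp : 5 ≤ p) :
    ∀ (b : ℕ) (a : ℤ), 0 ≤ a → a^2 = (p^2-1)*(b:ℤ)^2 + 4 →
      ∃ k, (b:ℤ) = 2 * Uf p k ∧ a = 2*Uf p (k+1) - 2*p*Uf p k := by
  intro b
  induction b using Nat.strong_induction_on with
  | _ b ih =>
    intro a ha heq
    rcases Nat.lt_or_ge b 2 with hb | hb2
    · interval_cases b
      · -- b = 0 : a^2 = 4, a = 2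
        push_cast at heq
        have ha2 : a = 2 := by nlinarith
        exact ⟨0, by simp [Uf_zero, Uf_one, ha2]⟩
      · -- b = 1 : a^2 = p^2 + 3, impossible
        exfalso
        push_cast at heq
        rcases le_or_gt a p with h | h
        · nlinarith
        · have h2 : p + 1 ≤ a := by omega
          nlinarith
    · have hB : (2:ℤ) ≤ (b:ℤ) := by exact_mod_cast hb2
      set B : ℤ := (b:ℤ) with hBdef
      set D : ℤ := p^2 - 1 with hDdef
      have hD : (24:ℤ) ≤ D := by nlinarith
      have hapB : a ≤ p * B := by
        by_contra hcon
        push_neg at hcon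
        have h2 := mul_self_lt_mul_self (by positivity : (0:ℤ) ≤ p*B) hcon
        nlinarith [mul_le_mul hB hB (by norm_num : (0:ℤ) ≤ 2) (by linarith : (0:ℤ) ≤ B)]
      have hb'nonneg : 0 ≤ p*B - a := by linarith
      have hb'lt : p*B - a < B := by
        by_contra hcon
        push_neg at hcon
        have hle : a ≤ (p-1)*B := by linarith
        have h2 := mul_self_le_mul_self ha hle
        nlinarith [mul_le_mul hB hB (by norm_num : (0:ℤ) ≤ 2) (by linarith : (0:ℤ) ≤ B)]
      have ha' : 0 ≤ p*a - D*B := by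
        by_contra hcon
        push_neg at hcon
        have h1 : 0 ≤ p*a := by positivity
        have h2 := mul_self_lt_mul_self h1 (by linarith : p*a < D*B)
        nlinarith [mul_le_mul hB hB (by norm_num : (0:ℤ) ≤ 2) (by linarith : (0:ℤ) ≤ B), sq_nonneg p]
      have heq' : (p*a - D*B)^2 = D * (p*B - a)^2 + 4 := by linear_combination heq
      set b' : ℕ := (p*B - a).toNat with hb'def
      have hb'cast : (b' : ℤ) = p*B - a := Int.toNat_of_nonneg hb'nonneg
      have hb'ltb : b' < b := by omega
      obtain ⟨k, hk1, hk2⟩ := ih b' hb'ltb (p*a - D*B) ha' (by rw [hb'cast]; linarith [heq'])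
      rw [hb'cast] at hk1
      refine ⟨k+1, ?_, ?_⟩
      · -- B = p*(p*B-a) + (p*a - D*B) = 2 p U_k + (2U_{k+1} - 2pU_k) = 2U_{k+1}
        have : B = p*(p*B - a) + (p*a - D*B) := by rw [hDdef]; ring
        rw [this, hk1, hk2]; ring
      · -- a = p*(p*a-D*B) + D*(p*B-a)
        have : a = p*(p*a - D*B) + D*(p*B - a) := by rw [hDdef]; ring
        rw [this, hk1, hk2, Uf_add_two, hDdef]; ring

private lemma lt_two_pow_aux : ∀ n : ℕ, n + 3 < 2^(n+2) := by
  intro n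
  induction n with
  | zero => norm_num
  | succ k hk =>
    have e : (2:ℕ)^(k+1+2) = 2^(k+2) * 2 := pow_succ 2 (k+2)
    omega

set_option maxHeartbeats 1000000

theorem luca_even_exponent (z w r s : ℕ) (ε₁ ε₂ : ℤ)
    (hε₁ : ε₁ = 1 ∨ ε₁ = -1) (hε₂ : ε₂ = 1 ∨ ε₂ = -1)
    (hz : 0 < z) (hw : 2 < w) (hs : 0 < s) (hrs : s < r) (hr : Even r) :
    ¬ ((z : ℤ) ^ 2 = (w : ℤ) ^ r + ε₁ * (w : ℤ) ^ s + ε₂) := by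
  intro h
  obtain ⟨m, rfl⟩ := hr
  have hm1 : 1 ≤ m := by omega
  have hW : (3:ℤ) ≤ (w:ℤ) := by exact_mod_cast hw
  have hW1 : (1:ℤ) ≤ (w:ℤ) := by linarith
  have hWm : (3:ℤ) ≤ (w:ℤ)^m := le_trans hW (le_self_pow₀ (by linarith) (by omega))
  have hWs : (3:ℤ) ≤ (w:ℤ)^s := le_trans hW (le_self_pow₀ (by linarith) (by omega))
  -- Step 1 : m < s
  have hms : m < s := by
    by_contra hcon
    push_neg at hcon
    have hss : (w:ℤ)^s ≤ (w:ℤ)^m := pow_le_pow_right₀ hW1 hcon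
    have hmm : (w:ℤ)^(m+m) = (w:ℤ)^m * (w:ℤ)^m := by rw [pow_add]
    rw [hmm] at h
    rcases lt_trichotomy ((z:ℤ)) ((w:ℤ)^m) with hlt | heq | hgt
    · have hz1 : (z:ℤ) ≤ (w:ℤ)^m - 1 := by omega
      have hz0 : (0:ℤ) ≤ (z:ℤ) := by positivity
      have h3 : (z:ℤ)^2 ≤ ((w:ℤ)^m - 1)^2 := pow_le_pow_left₀ hz0 hz1 2
      have hexp : ((w:ℤ)^m - 1)^2 = (w:ℤ)^m*(w:ℤ)^m - 2*(w:ℤ)^m + 1 := by ring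
      rcases hε₁ with rfl | rfl <;> rcases hε₂ with rfl | rfl <;> linarith
    · rw [heq] at h
      have hexp : ((w:ℤ)^m)^2 = (w:ℤ)^m*(w:ℤ)^m := by ring
      rcases hε₁ with rfl | rfl <;> rcases hε₂ with rfl | rfl <;> linarith
    · have hz1 : (w:ℤ)^m + 1 ≤ (z:ℤ) := by omega
      have h3 : ((w:ℤ)^m + 1)^2 ≤ (z:ℤ)^2 :=
        pow_le_pow_left₀ (by positivity : (0:ℤ) ≤ (w:ℤ)^m + 1) hz1 2
      have hexp : ((w:ℤ)^m + 1)^2 = (w:ℤ)^m*(w:ℤ)^m + 2*(w:ℤ)^m + 1 := by ring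
      rcases hε₁ with rfl | rfl <;> rcases hε₂ with rfl | rfl <;> linarith
  -- Step 2 : setup t, q, p'
  set t : ℕ := s - m with ht
  set q : ℕ := m + m - s with hq
  have ht1 : 1 ≤ t := by omega
  have hq1 : 1 ≤ q := by omega
  have hqt : q + t = m := by omega
  have hq2t : q + 2*t = s := by omega
  have hWq : (3:ℤ) ≤ (w:ℤ)^q := le_trans hW (le_self_pow₀ (by linarith) (by omega))
  have hWt : (3:ℤ) ≤ (w:ℤ)^t := le_trans hW (le_self_pow₀ (by linarith) (by omega))
  set P : ℤ := 2*(w:ℤ)^q + ε₁ with hP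
  have hp5 : 5 ≤ P := by rcases hε₁ with rfl | rfl <;> simp [hP] <;> linarith
  have hε1sq : ε₁^2 = 1 := by rcases hε₁ with rfl | rfl <;> norm_num
  have hws : (w:ℤ)^s = (w:ℤ)^q * ((w:ℤ)^t)^2 := by
    rw [← pow_mul, ← pow_add]; congr 1; omega
  have hwr : (w:ℤ)^(m+m) = ((w:ℤ)^q)^2 * ((w:ℤ)^t)^2 := by
    rw [← pow_mul, ← pow_mul, ← pow_add]; congr 1; omega
  rw [hws, hwr] at h
  have key : (2*(z:ℤ))^2 = (P^2 - 1) * ((w:ℤ)^t)^2 + 4*ε₂ := by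
    rw [hP]; linear_combination 4*h - ((w:ℤ)^t)^2 * hε1sq
  have hcastwt : ((w^t : ℕ) : ℤ) = (w:ℤ)^t := by push_cast; ring
  rcases hε₂ with rfl | rfl
  · -- ε₂ = 1 : Pell positive case
    obtain ⟨k, hk1, -⟩ := pell_pos P hp5 (w^t) (2*(z:ℤ)) (by positivity)
      (by rw [hcastwt]; linarith [key])
    rw [hcastwt] at hk1
    rcases Nat.even_or_odd w with hwe | hwo
    · -- w even
      have hUk_nonneg := Uf_nonneg P (by linarith) k
      have hk0 : k ≠ 0 := by
        rintro rfl
        rw [Uf_zero] at hk1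
        linarith
      -- k ≤ t
      have hkt : k ≤ t := by
        by_contra hcon
        push_neg at hcon
        have hk1t : t ≤ k - 1 := by omega
        have hg := (Uf_growth P (by linarith) (k-1)).1
        have hkk : k - 1 + 1 = k := by omega
        rw [hkk] at hg
        have h2P : (w:ℤ) ≤ 2*P - 1 := by
          have : (w:ℤ) ≤ (w:ℤ)^q := le_self_pow₀ (by linarith) (by omega)
          rcases hε₁ with rfl | rfl <;> simp [hP] <;> linarith
        have hstep : (w:ℤ)^t ≤ (2*P-1)^(k-1) := by
          calc (w:ℤ)^t ≤ (w:ℤ)^(k-1) := pow_le_pow_right₀ hW1 hk1t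
            _ ≤ (2*P-1)^(k-1) := pow_le_pow_left₀ (by linarith) h2P _
        linarith
      -- 2^(t-1) ∣ k
      have hdvd2 : (2:ℤ) ∣ (w:ℤ) := by
        obtain ⟨c, hc⟩ := hwe; exact ⟨(c:ℤ), by push_cast [hc]; ring⟩
      have hPodd : Odd P := by
        rcases hε₁ with rfl | rfl
        · exact ⟨(w:ℤ)^q, by rw [hP]⟩
        · exact ⟨(w:ℤ)^q - 1, by rw [hP]; ring⟩
      have hdvdwt : (2:ℤ)^t ∣ (w:ℤ)^t := pow_dvd_pow_of_dvd hdvd2 t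
      have hdvdU : (2:ℤ)^(t-1) ∣ Uf P k := by
        obtain ⟨c, hc⟩ := hdvdwt
        rw [hk1] at hc
        have h2t : (2:ℤ)^t = 2 * 2^(t-1) := by
          rw [← pow_succ']
          congr 1; omega
        rw [h2t] at hc
        have : Uf P k = 2^(t-1) * c :=
          mul_left_cancel₀ (two_ne_zero (α := ℤ)) (by linarith)
        exact ⟨c, this⟩
      have hdvdk : 2^(t-1) ∣ k := Uf_dvd_two_pow P hPodd (t-1) k hdvdU
      have hklb : 2^(t-1) ≤ k := Nat.le_of_dvd (by omega) hdvdk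
      -- case analysis on t
      rcases Nat.lt_or_ge t 3 with htsmall | ht3
      · interval_cases t
        · -- t = 1 : k = 1, w = 2
          have hk1' : k = 1 := by omega
          rw [hk1', Uf_one] at hk1
          have : (w:ℤ) = 2 := by rw [pow_one] at hk1; linarith
          have : w = 2 := by exact_mod_cast this
          omega
        · -- t = 2 : k = 2, w^2 = 4P
          have hk2 : k = 2 := by
            have : 2 ∣ k := by simpa using hdvdk
            omega
          rw [hk2] at hk1
          rw [Uf_add_two, Uf_one, Uf_zero] at hk1
          -- hk1 : w^2 = 2*(2P*1 - 0) = 4P = 8 w^q + 4 ε₁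
          have hwdvd : (w:ℤ) ∣ 4*ε₁ := by
            have d1 : (w:ℤ) ∣ (w:ℤ)^2 := dvd_pow_self _ (by norm_num)
            have d2 : (w:ℤ) ∣ 8*(w:ℤ)^q := (dvd_pow_self ((w:ℤ)) (by omega : q ≠ 0)).mul_left 8
            have : 4*ε₁ = (w:ℤ)^2 - 8*(w:ℤ)^q := by rw [hP] at hk1; linarith
            rw [this]
            exact dvd_sub d1 d2
          have hwdvd4 : (w:ℤ) ∣ 4 := by
            rcases hε₁ with rfl | rfl
            · simpa using hwdvd
            · have : (w:ℤ) ∣ -(4*(-1)) := dvd_neg.mpr hwdvd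
              simpa using this
          have hw4 : w = 4 := by
            have hdvdnat : w ∣ 4 := by exact_mod_cast hwdvd4
            have hle : w ≤ 4 := Nat.le_of_dvd (by norm_num) hdvdnat
            interval_cases w
            · norm_num at hdvdnat
            · rfl
          subst hw4
          have h4q : (4:ℤ)^q ≥ 4 := le_self_pow₀ (by norm_num) (by omega)
          rw [hP] at hk1
          push_cast at hk1
          rcases hε₁ with rfl | rfl <;> nlinarith
      · -- t ≥ 3 : 2^(t-1) > t ≥ k
        have := lt_two_pow_aux (t - 3)
        have he : t - 3 + 2 = t - 1 := by omega
        rw [he] at this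
        omega
    · -- w odd : w^t odd but = 2 * U k
      have : Odd ((w:ℤ)^t) := by
        have : Odd ((w:ℤ)) := by exact_mod_cast hwo
        exact this.pow
      rw [hk1] at this
      exact (Int.not_odd_iff_even.mpr ⟨Uf P k, by ring⟩) this
  · -- ε₂ = -1 : Pell negative case
    exact pell_neg P hp5 (w^t) (2*(z:ℤ)) (by positivity)
      (by rw [hcastwt]; linarith [key])
end

section
/- There are no solutions to p^r + p^s + 1 = z^2 in positive integers z, r, s with p an odd prime. -/
/-!
A congruence mod 4 forces `r + s` to be odd, so the equation reads `z² - (w² + 1) = p ^ b` with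
`w = p ^ α`, `r = 2α` and `s = b` odd. Let `d = w² + 1` and let `𝔮` be a prime of `ℤ√d` above `p`
(`p` splits, as `d ≡ 1 mod p`). The elements `z ± √d` and `(w² + w + 1) ± (w + 1)√d`, of norms
`p ^ b` and `p ^ (2α)`, show that `𝔮 ^ b` and `𝔮 ^ (2α)` are principal; hence so is
`𝔮 ^ gcd(b, 2α)` and, since `gcd(b, 2α)` is odd and divides `α`, also `𝔮 ^ α`. Dividing
`(w + 1) ± √d`, of norm `2p ^ α`, by a generator of `𝔮 ^ α` leaves an element of norm `±2`,
and a descent shows that `x² - (w² + 1)y² = ±2` has no solution once `w ≥ 2`.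
-/

theorem odd_add_of_pow_add_pow_add_one_eq_sq {p r s z : ℕ} (hp : Odd p)
    (h : p ^ r + p ^ s + 1 = z ^ 2) : Odd (r + s) := by
  by_contra hrs
  obtain ⟨k, hk⟩ := Nat.not_odd_iff_even.mp hrs
  obtain ⟨m, rfl⟩ := hp
  have h4 := congrArg (Nat.cast : ℕ → ZMod 4) h
  push_cast at h4
  set q : ZMod 4 := 2 * m + 1
  have hq : q ^ 2 = 1 := (by decide : ∀ m : ZMod 4, (2 * m + 1) ^ 2 = 1) m
  have hr : q ^ r * q ^ r = 1 := by rw [← pow_add, ← two_mul, pow_mul, hq, one_pow]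
  have hrs : q ^ r * q ^ s = 1 := by rw [← pow_add, hk, ← two_mul, pow_mul, hq, one_pow]
  have hsr : q ^ s = q ^ r := by
    calc q ^ s = q ^ r * q ^ r * q ^ s := by rw [hr, one_mul]
      _ = q ^ r := by rw [mul_assoc, hrs, mul_one]
  rw [hsr] at h4
  exact (by decide : ∀ t y : ZMod 4, t * t = 1 → t + t + 1 ≠ y ^ 2) _ _ hr h4

theorem Nat.gcd_mem_of_sub_mem {P : Set ℕ} (hsub : ∀ ⦃a b⦄, b ≤ a → a ∈ P → b ∈ P → a - b ∈ P)
    {a b : ℕ} (ha : a ∈ P) (hb : b ∈ P) : Nat.gcd a b ∈ P := by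
  rcases Nat.eq_zero_or_pos a with rfl | ha0
  · simpa using hb
  rcases Nat.eq_zero_or_pos b with rfl | hb0
  · simpa using ha
  rcases le_total b a with hba | hab
  · rw [← Nat.gcd_sub_self_left hba]
    exact gcd_mem_of_sub_mem hsub (hsub hba ha hb) hb
  · rw [← Nat.gcd_sub_self_right hab]
    exact gcd_mem_of_sub_mem hsub ha (hsub hab hb ha)
termination_by a + b

theorem Nat.mem_of_two_mul_mem_of_odd {P : AddSubmonoid ℕ}
    (hsub : ∀ ⦃a b⦄, b ≤ a → a ∈ P → b ∈ P → a - b ∈ P) {a b : ℕ} (hb : Odd b) (hbP : b ∈ P)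
    (haP : 2 * a ∈ P) : a ∈ P := by
  obtain ⟨k, hk⟩ : Nat.gcd b (2 * a) ∣ a :=
    Nat.Coprime.dvd_of_dvd_mul_left ((hb.of_dvd_nat (Nat.gcd_dvd_left _ _)).coprime_two_right)
      (Nat.gcd_dvd_right _ _)
  rw [hk, mul_comm, ← smul_eq_mul]
  exact P.nsmul_mem (Nat.gcd_mem_of_sub_mem (P := P) hsub hbP haP) k

/-- The descent step is multiplication by the unit `-w + √(w² + 1)` of norm `-1`:
`(x + y√(w² + 1))(-w + √(w² + 1)) = (y(w² + 1) - xw) + (x - yw)√(w² + 1)`. -/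
theorem sq_sub_mul_sq_natAbs_ne_two {w : ℤ} (hw : 2 ≤ w) {x y : ℤ} (hx : 0 ≤ x) (hy : 0 ≤ y) :
    (x ^ 2 - (w ^ 2 + 1) * y ^ 2).natAbs ≠ 2 := by
  intro h
  have hN := Int.natAbs_eq_iff.mp h
  push_cast at hN
  obtain rfl | rfl | hy2 : y = 0 ∨ y = 1 ∨ 2 ≤ y := by omega
  · obtain hx1 | hx2 : x ≤ 1 ∨ 2 ≤ x := by omega
    all_goals rcases hN with hN | hN <;> nlinarith
  · obtain hx1 | rfl | hx2 : x ≤ w - 1 ∨ x = w ∨ w + 1 ≤ x := by omega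
    all_goals rcases hN with hN | hN <;> nlinarith
  · have hlo : y * w < x := by
      by_contra! hle
      rcases hN with hN | hN <;> nlinarith [mul_le_mul hle hle hx (by positivity)]
    have hhi : x < y * w + y := by
      by_contra! hle
      rcases hN with hN | hN <;> nlinarith [mul_le_mul hle hle (by positivity) hx]
    have hx' : 0 ≤ y * (w ^ 2 + 1) - x * w := by
      by_contra! hlt
      have hle : y * (w ^ 2 + 1) ≤ x * w := by linarith
      rcases hN with hN | hN <;> nlinarith [mul_le_mul hle hle (by positivity) (by positivity)]
    refine sq_sub_mul_sq_natAbs_ne_two hw hx' (y := x - y * w) (by linarith) ?_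
    rw [show (y * (w ^ 2 + 1) - x * w) ^ 2 - (w ^ 2 + 1) * (x - y * w) ^ 2
      = -(x ^ 2 - (w ^ 2 + 1) * y ^ 2) by ring, Int.natAbs_neg, h]
termination_by y.toNat
decreasing_by omega

namespace PadicInt

variable {p : ℕ} [Fact p.Prime]

theorem isUnit_intCast_iff {k : ℤ} : IsUnit (k : ℤ_[p]) ↔ ¬ (p : ℤ) ∣ k := by
  rw [isUnit_iff, ← norm_int_lt_one_iff_dvd, not_lt]
  exact ⟨fun h => h.ge, fun h => le_antisymm (norm_le_one _) h⟩

theorem isUnit_two (hp : p ≠ 2) : IsUnit (2 : ℤ_[p]) := by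
  have h := (isUnit_intCast_iff (p := p) (k := 2)).mpr fun h => hp <|
    (Nat.prime_dvd_prime_iff_eq Fact.out Nat.prime_two).mp (by exact_mod_cast h)
  simpa using h

theorem exists_mul_self_eq_of_dvd_sub_one (hp : p ≠ 2) {d : ℤ} (hd : (p : ℤ) ∣ d - 1) :
    ∃ s : ℤ_[p], s * s = d ∧ IsUnit s := by
  have hnorm : ‖(Polynomial.X ^ 2 - Polynomial.C d).aeval (1 : ℤ_[p])‖ <
      ‖(Polynomial.X ^ 2 - Polynomial.C d).derivative.aeval (1 : ℤ_[p])‖ ^ 2 := by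
    have h1 : ‖((1 - d : ℤ) : ℤ_[p])‖ < 1 :=
      (norm_int_lt_one_iff_dvd _).mpr (by simpa using hd.neg_right)
    have h2 : (Polynomial.aeval (1 : ℤ_[p])) (2 : Polynomial ℤ) = 2 := map_ofNat _ 2
    simpa [h2, isUnit_iff.mp (isUnit_two hp)] using h1
  obtain ⟨s, hs, -⟩ := hensels_lemma hnorm
  have hss : s * s = d := by simpa [sq, sub_eq_zero] using hs
  refine ⟨s, hss, isUnit_of_mul_isUnit_left (y := s) (hss ▸ isUnit_intCast_iff.mpr fun h => ?_)⟩
  have h1 : (p : ℤ) ∣ 1 := by simpa using dvd_sub h hd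
  exact (Fact.out : p.Prime).not_dvd_one (Int.natCast_dvd.mp h1)

end PadicInt

open PadicInt

namespace Zsqrtd

section PadicRoot

variable {p : ℕ} [Fact p.Prime] {d : ℤ} (s : {s : ℤ_[p] // s * s = d})

theorem lift_mul_lift_star (a : ℤ√d) : lift s a * lift s (star a) = a.norm := by
  rw [← map_mul, ← norm_eq_mul_conj, map_intCast]

theorem associated_lift_star {a : ℤ√d} (ha : IsUnit (lift s a)) :
    Associated (lift s (star a)) (a.norm : ℤ_[p]) :=
  ⟨ha.unit, by rw [mul_comm, IsUnit.unit_spec, lift_mul_lift_star]⟩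

theorem pow_dvd_lift_star {a : ℤ√d} {c : ℕ} (ha : IsUnit (lift s a))
    (hc : (p : ℤ) ^ c ∣ a.norm) : (p : ℤ_[p]) ^ c ∣ lift s (star a) :=
  (associated_lift_star s ha).dvd_iff_dvd_right.mpr ((pow_p_dvd_int_iff c _).mpr hc)

theorem associated_norm_pow {a : ℤ√d} {c : ℕ} (ha : a.norm.natAbs = p ^ c) :
    Associated (a.norm : ℤ_[p]) ((p : ℤ_[p]) ^ c) := by
  simpa [ha] using (Int.associated_natAbs a.norm).map (Int.castRingHom ℤ_[p])

theorem isUnit_lift_or_isUnit_lift_star (hp : p ≠ 2) (hs : IsUnit (s : ℤ_[p])) {a : ℤ√d}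
    (ha : ¬ (p : ℤ) ∣ a.im) : IsUnit (lift s a) ∨ IsUnit (lift s (star a)) := by
  by_contra! h
  have hsub : lift s a - lift s (star a) ∈ IsLocalRing.maximalIdeal ℤ_[p] :=
    Ideal.sub_mem _ h.1 h.2
  have heq : lift s a - lift s (star a) = 2 * s * a.im := by
    simp only [lift_apply_apply, re_star, im_star, Int.cast_neg]; ring
  rw [heq, IsLocalRing.mem_maximalIdeal, mem_nonunits_iff] at hsub
  exact hsub (((isUnit_two hp).mul hs).mul (isUnit_intCast_iff.mpr ha))

theorem exists_norm_eq_isUnit_lift (hp : p ≠ 2) (hs : IsUnit (s : ℤ_[p])) {a : ℤ√d}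
    (ha : ¬ (p : ℤ) ∣ a.im) : ∃ a' : ℤ√d, a'.norm = a.norm ∧ IsUnit (lift s a') := by
  rcases isUnit_lift_or_isUnit_lift_star s hp hs ha with hu | hu
  · exact ⟨a, rfl, hu⟩
  · exact ⟨star a, norm_conj a, hu⟩

theorem intCast_pow_dvd_of_dvd_lift (hp : p ≠ 2) (hs : IsUnit (s : ℤ_[p])) {u : ℤ√d} {c : ℕ}
    (hu : (p : ℤ_[p]) ^ c ∣ lift s u) (hu' : (p : ℤ_[p]) ^ c ∣ lift s (star u)) :
    (((p : ℤ) ^ c : ℤ) : ℤ√d) ∣ u := by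
  have hre : lift s u + lift s (star u) = 2 * u.re := by
    simp only [lift_apply_apply, re_star, im_star, Int.cast_neg]; ring
  have him : lift s u - lift s (star u) = 2 * s * u.im := by
    simp only [lift_apply_apply, re_star, im_star, Int.cast_neg]; ring
  rw [intCast_dvd, ← pow_p_dvd_int_iff, ← pow_p_dvd_int_iff]
  constructor
  · rw [← (isUnit_two hp).dvd_mul_left, ← hre]
    exact dvd_add hu hu'
  · rw [← ((isUnit_two hp).mul hs).dvd_mul_left, ← him]
    exact dvd_sub hu hu'

theorem exists_mul_star_eq_pow_mul (hp : p ≠ 2) (hs : IsUnit (s : ℤ_[p])) {a b : ℤ√d}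
    {c m n : ℕ} (ha : IsUnit (lift s a)) (hb : IsUnit (lift s b))
    (hna : a.norm.natAbs = p ^ c * m) (hnb : b.norm.natAbs = p ^ c * n) :
    ∃ v : ℤ√d, a * star b = (((p : ℤ) ^ c : ℤ) : ℤ√d) * v ∧ v.norm.natAbs = m * n := by
  have hpa : (p : ℤ) ^ c ∣ a.norm := by
    rw [← Nat.cast_pow, Int.natCast_dvd, hna]; exact dvd_mul_right _ _
  have hpb : (p : ℤ) ^ c ∣ b.norm := by
    rw [← Nat.cast_pow, Int.natCast_dvd, hnb]; exact dvd_mul_right _ _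
  obtain ⟨v, hv⟩ := intCast_pow_dvd_of_dvd_lift s hp hs (u := a * star b)
    (by rw [map_mul]; exact dvd_mul_of_dvd_right (pow_dvd_lift_star s hb hpb) _)
    (by rw [star_mul, star_star, map_mul]; exact dvd_mul_of_dvd_right (pow_dvd_lift_star s ha hpa) _)
  refine ⟨v, hv, ?_⟩
  have hnorm := congrArg (fun u => u.norm.natAbs) hv
  simp only [norm_mul, norm_conj, norm_intCast, Int.natAbs_mul, Int.natAbs_pow,
    Int.natAbs_natCast, hna, hnb] at hnorm
  have hpc : p ^ c ≠ 0 := pow_ne_zero c (Fact.out : p.Prime).ne_zero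
  refine mul_left_cancel₀ (mul_ne_zero hpc hpc) ?_
  rw [← hnorm]
  ring

/-- `c ∈ cleanExponents s` says that `𝔮 ^ c` is principal, `𝔮` being the prime of `ℤ√d` above `p`
at which `√d ≡ -s`; its generators are the elements of norm `±p ^ c` that stay `p`-adic units
under `√d ↦ s`. -/
def cleanExponents : AddSubmonoid ℕ where
  carrier := {c | ∃ a : ℤ√d, a.norm.natAbs = p ^ c ∧ IsUnit (lift s a)}
  zero_mem' := ⟨1, by simp, by simp⟩
  add_mem' := by
    rintro c₁ c₂ ⟨a, hna, ha⟩ ⟨b, hnb, hb⟩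
    exact ⟨a * b, by rw [norm_mul, Int.natAbs_mul, hna, hnb, pow_add],
      by rw [map_mul]; exact ha.mul hb⟩

theorem mem_cleanExponents_of_not_dvd_im (hp : p ≠ 2) (hs : IsUnit (s : ℤ_[p])) {a : ℤ√d}
    {c : ℕ} (him : ¬ (p : ℤ) ∣ a.im) (hna : a.norm.natAbs = p ^ c) : c ∈ cleanExponents s :=
  let ⟨a', ha', hu⟩ := exists_norm_eq_isUnit_lift s hp hs him
  ⟨a', ha' ▸ hna, hu⟩

theorem sub_mem_cleanExponents (hp : p ≠ 2) (hs : IsUnit (s : ℤ_[p])) {c₁ c₂ : ℕ}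
    (hc : c₂ ≤ c₁) (h₁ : c₁ ∈ cleanExponents s) (h₂ : c₂ ∈ cleanExponents s) :
    c₁ - c₂ ∈ cleanExponents s := by
  obtain ⟨a, hna, ha⟩ := h₁
  obtain ⟨b, hnb, hb⟩ := h₂
  obtain ⟨v, hv, hnv⟩ := exists_mul_star_eq_pow_mul s hp hs ha hb (m := p ^ (c₁ - c₂)) (n := 1)
    (by rw [hna, ← pow_add, Nat.add_sub_cancel' hc]) (by rw [hnb, mul_one])
  refine ⟨v, by rw [hnv, mul_one], associated_one_iff_isUnit.mp ?_⟩
  have hlift : lift s a * lift s (star b) = (p : ℤ_[p]) ^ c₂ * lift s v := by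
    rw [← map_mul, hv, map_mul, map_intCast, Int.cast_pow, Int.cast_natCast]
  have hassoc : Associated ((p : ℤ_[p]) ^ c₂ * lift s v) ((p : ℤ_[p]) ^ c₂ * 1) := by
    rw [← hlift, mul_one, associated_isUnit_mul_left_iff ha]
    exact (associated_lift_star s hb).trans (associated_norm_pow hnb)
  exact hassoc.of_mul_left (Associated.refl _)
    (pow_ne_zero _ (Nat.cast_ne_zero.mpr (Fact.out : p.Prime).ne_zero))

end PadicRoot

theorem natAbs_norm_ne_two {w : ℤ} (hw : 2 ≤ w) (v : ℤ√(w ^ 2 + 1)) : v.norm.natAbs ≠ 2 := by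
  simpa only [sq, abs_mul_abs_self, mul_assoc, norm_def] using
    sq_sub_mul_sq_natAbs_ne_two hw (abs_nonneg v.re) (abs_nonneg v.im)

end Zsqrtd

open Zsqrtd in
theorem sq_ne_pow_add_pow_add_one_of_even_of_odd {p : ℕ} [Fact p.Prime] (hp : p ≠ 2) {r b : ℕ}
    (hr : Even r) (hr0 : r ≠ 0) (hb : Odd b) (z : ℤ) :
    z ^ 2 ≠ (p : ℤ) ^ r + (p : ℤ) ^ b + 1 := by
  intro hz
  obtain ⟨α, rfl⟩ := hr
  set w : ℤ := (p : ℤ) ^ α with hw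
  have hw2 : (p : ℤ) ^ (α + α) = w ^ 2 := by rw [hw, ← pow_mul, mul_two]
  have hpw : (p : ℤ) ∣ w := dvd_pow_self _ (by omega)
  have hp1 : ¬ (p : ℤ) ∣ 1 := by
    rw [Int.natCast_dvd]; exact (Fact.out : p.Prime).not_dvd_one
  obtain ⟨s, hs, hsu⟩ := exists_mul_self_eq_of_dvd_sub_one hp (d := w ^ 2 + 1)
    (by simpa using dvd_pow hpw two_ne_zero)
  have hbE : b ∈ cleanExponents ⟨s, hs⟩ :=
    mem_cleanExponents_of_not_dvd_im _ hp hsu (a := ⟨z, 1⟩) hp1 <| by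
      rw [show (⟨z, 1⟩ : ℤ√(w ^ 2 + 1)).norm = (p : ℤ) ^ b by
        rw [norm_def]; linear_combination hz + hw2]
      simp
  have h2αE : 2 * α ∈ cleanExponents ⟨s, hs⟩ :=
    mem_cleanExponents_of_not_dvd_im _ hp hsu (a := ⟨w ^ 2 + w + 1, w + 1⟩)
      (fun h => hp1 (by simpa using dvd_sub h hpw)) <| by
      rw [show (⟨w ^ 2 + w + 1, w + 1⟩ : ℤ√(w ^ 2 + 1)).norm = (p : ℤ) ^ (2 * α) by
        rw [two_mul, norm_def, hw2]; ring]
      simp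
  have hαE : α ∈ cleanExponents ⟨s, hs⟩ := Nat.mem_of_two_mul_mem_of_odd
    (fun _ _ hc h₁ h₂ => sub_mem_cleanExponents _ hp hsu hc h₁ h₂) hb hbE h2αE
  obtain ⟨a, hna, ha⟩ := hαE
  obtain ⟨η, hη, hηu⟩ := exists_norm_eq_isUnit_lift ⟨s, hs⟩ hp hsu (a := ⟨w + 1, 1⟩) hp1
  obtain ⟨v, -, hv⟩ := exists_mul_star_eq_pow_mul _ hp hsu ha hηu (m := 1) (n := 2)
    (by rw [hna, mul_one]) <| by
      rw [hη, show (⟨w + 1, 1⟩ : ℤ√(w ^ 2 + 1)).norm = (p : ℤ) ^ α * 2 by rw [norm_def]; ring]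
      simp [Int.natAbs_mul]
  have hw_two : 2 ≤ w := (Nat.cast_le.mpr (Fact.out : p.Prime).two_le).trans
    (le_self_pow₀ (by exact_mod_cast (Fact.out : p.Prime).one_le) (by omega))
  exact natAbs_norm_ne_two hw_two v hv

theorem luca_plus (p : ℕ) (hp : p.Prime) (hodd : Odd p) :
    ¬ ∃ z r s : ℕ, 0 < z ∧ 0 < r ∧ 0 < s ∧ p ^ r + p ^ s + 1 = z ^ 2 := by
  rintro ⟨z, r, s, -, hr, hs, h⟩
  have := Fact.mk hp
  have hp2 : p ≠ 2 := by rintro rfl; exact absurd hodd (by decide)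
  have hrs := odd_add_of_pow_add_pow_add_one_eq_sq hodd h
  have hz : (z : ℤ) ^ 2 = (p : ℤ) ^ r + (p : ℤ) ^ s + 1 := by exact_mod_cast h.symm
  rcases Nat.even_or_odd r with hre | hro
  · exact sq_ne_pow_add_pow_add_one_of_even_of_odd hp2 hre hr.ne'
      ((Nat.odd_add'.mp hrs).mpr hre) z hz
  · exact sq_ne_pow_add_pow_add_one_of_even_of_odd hp2 ((Nat.odd_add.mp hrs).mp hro) hs.ne'
      hro z (by rw [hz]; ring)
end

section
/- Let M = 2^t - 1 > 3 be a Mersenne prime and c = M + 2. Then the only solutions (x, y, u, v) in nonnegative integers x, y and u, v ∈ {0,1} of (-1)^u 2^x + (-1)^v M^y = c are: 2^t + 1 = c, 2 + M = c, and 2^{t+1} - M = c. -/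
set_option maxHeartbeats 2000000 in
theorem mersenne_Mplus2 (t M c : ℕ) (ht : 3 ≤ t) (hM : M = 2 ^ t - 1) (hMp : M.Prime)
    (hc : c = M + 2) (x y u v : ℕ) (hu : u ≤ 1) (hv : v ≤ 1) :
    (-1 : ℤ) ^ u * 2 ^ x + (-1 : ℤ) ^ v * (M : ℤ) ^ y = c ↔
      (x, y, u, v) = (t, 0, 0, 0) ∨ (x, y, u, v) = (1, 1, 0, 0) ∨
      (x, y, u, v) = (t + 1, 1, 0, 1) := by
  subst hc
  obtain ⟨T, rfl⟩ : ∃ T, t = T + 3 := ⟨t - 3, by omega⟩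
  have h8 : (8 : ℕ) ≤ 2 ^ (T + 3) := by
    calc (8 : ℕ) = 2 ^ 3 := by norm_num
    _ ≤ 2 ^ (T + 3) := Nat.pow_le_pow_right (by norm_num) (by omega)
  have hP : M + 1 = 2 ^ (T + 3) := by omega
  have hM7 : 7 ≤ M := by omega
  have hPZ : (M : ℤ) + 1 = 2 ^ (T + 3) := by
    have := congrArg (fun n : ℕ => (n : ℤ)) hP
    push_cast at this
    linarith
  -- T is even (i.e. t odd), since otherwise 3 ∣ M
  have hTeven : Even T := by
    by_contra hodd
    rw [Nat.not_even_iff_odd] at hodd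
    obtain ⟨a, ha⟩ := hodd
    have hcast : ((M : ZMod 3)) + 1 = (2 : ZMod 3) ^ (T + 3) := by
      have := congrArg (fun n : ℕ => (n : ZMod 3)) hP
      push_cast at this
      linear_combination this
    have h2 : (2 : ZMod 3) ^ (T + 3) = 1 := by
      rw [show T + 3 = 2 * (a + 2) from by omega, pow_mul]
      have h4 : (2 : ZMod 3) ^ 2 = 1 := by decide
      rw [h4, one_pow]
    rw [h2] at hcast
    have h3 : ((M : ℕ) : ZMod 3) = 0 := by linear_combination hcast
    have hdvd3 : (3 : ℕ) ∣ M := (ZMod.natCast_eq_zero_iff M 3).mp h3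
    have h33 := (Nat.prime_dvd_prime_iff_eq (by norm_num) hMp).mp hdvd3
    omega
  constructor
  · intro h
    rcases Nat.le_one_iff_eq_zero_or_eq_one.mp hu with rfl | rfl <;>
      rcases Nat.le_one_iff_eq_zero_or_eq_one.mp hv with rfl | rfl
    · -- u = 0, v = 0 : 2^x + M^y = M + 2
      simp only [pow_zero, one_mul] at h
      have hN : 2 ^ x + M ^ y = M + 2 := by exact_mod_cast h
      rcases y with _ | _ | n
      · -- y = 0
        rw [pow_zero] at hN
        have hx : 2 ^ x = 2 ^ (T + 3) := by omega
        have hxt : x = T + 3 := Nat.pow_right_injective (le_refl 2) hx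
        subst hxt
        left
        rfl
      · -- y = 1
        rw [pow_one] at hN
        have hx : 2 ^ x = 2 ^ 1 := by omega
        have hxt : x = 1 := Nat.pow_right_injective (le_refl 2) hx
        subst hxt
        right; left
        rfl
      · -- y ≥ 2 : impossible
        exfalso
        have h1 : M ^ 2 ≤ M ^ (n + 1 + 1) := Nat.pow_le_pow_right (by omega) (by omega)
        have h2 : 7 * M ≤ M * M := Nat.mul_le_mul_right M hM7
        have h3 : M ^ 2 = M * M := pow_two M
        have h4 : 0 < 2 ^ x := Nat.two_pow_pos x
        omega
    · -- u = 0, v = 1 : 2^x - M^y = M + 2  (the hard case)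
      simp only [pow_zero, pow_one, one_mul, neg_one_mul] at h
      have hN : 2 ^ x = M ^ y + M + 2 := by
        have h2 : ((2 ^ x : ℕ) : ℤ) = ((M ^ y + M + 2 : ℕ) : ℤ) := by
          push_cast at h ⊢
          linarith
        exact_mod_cast h2
      rcases Nat.even_or_odd y with hy | hy
      · -- y even : impossible mod 4
        exfalso
        have hM4 : ((M : ℕ) : ZMod 4) = -1 := by
          have hc4 : ((M : ZMod 4)) + 1 = (2 : ZMod 4) ^ (T + 3) := by
            have := congrArg (fun n : ℕ => (n : ZMod 4)) hP
            push_cast at this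
            linear_combination this
          have h20 : (2 : ZMod 4) ^ (T + 3) = 0 := by
            rw [show T + 3 = T + 1 + 2 from by omega, pow_add]
            have : (2 : ZMod 4) ^ 2 = 0 := by decide
            rw [this, mul_zero]
          rw [h20] at hc4
          linear_combination hc4
        have hcast := congrArg (fun n : ℕ => (n : ZMod 4)) hN
        push_cast at hcast
        rw [hM4, Even.neg_one_pow hy] at hcast
        have hfin : (2 : ZMod 4) ^ x = 2 := by
          rw [hcast]
          decide
        rcases x with _ | _ | b
        · rw [pow_zero] at hfin; exact absurd hfin (by decide)
        · have h0 : 0 < M ^ y := Nat.pow_pos (by omega)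
          omega
        · have hz : (2 : ZMod 4) ^ (b + 2) = 0 := by
            rw [pow_add]
            have : (2 : ZMod 4) ^ 2 = 0 := by decide
            rw [this, mul_zero]
          rw [hz] at hfin
          exact absurd hfin (by decide)
      · -- y odd
        obtain ⟨r, hr⟩ := hy
        rcases le_or_gt x (T + 4) with hxle | hxgt
        · -- x ≤ t+1 : forces y = 1, x = t+1
          have hle : 2 ^ x ≤ 2 ^ (T + 4) := Nat.pow_le_pow_right (by norm_num) hxle
          have h2T4 : (2 : ℕ) ^ (T + 4) = 2 ^ (T + 3) * 2 := pow_succ 2 (T + 3)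
          have hMy : M ^ y ≤ M := by omega
          have hy1 : y = 1 := by
            by_contra hne
            have hy3 : 2 ≤ y := by omega
            have hm2 : M ^ 2 ≤ M ^ y := Nat.pow_le_pow_right (by omega) hy3
            have h2 : 7 * M ≤ M * M := Nat.mul_le_mul_right M hM7
            have h3 : M ^ 2 = M * M := pow_two M
            omega
          rw [hy1, pow_one] at hN
          have hx : 2 ^ x = 2 ^ (T + 4) := by omega
          have hxt : x = T + 4 := Nat.pow_right_injective (le_refl 2) hx
          subst hxt
          subst hy1
          right; right
          rfl
        · -- x ≥ t+2 : contradiction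
          exfalso
          have hx5 : T + 5 ≤ x := by omega
          -- Step A : 4 ∣ y + 1
          have hZeq : (2 : ℤ) ^ x = (M : ℤ) ^ y + (M : ℤ) + 2 := by
            have := congrArg (fun n : ℕ => (n : ℤ)) hN
            push_cast at this
            linarith
          have hsq2 : ((M : ℤ) + 1) ^ 2 = 2 ^ (2 * T + 6) := by
            rw [hPZ, ← pow_mul]
            congr 1
            omega
          have hD : (M : ℤ) ^ (y + 1) - 1 = (M : ℤ) * 2 ^ x - 2 ^ (2 * T + 6) := by
            rw [pow_succ]
            linear_combination (-(M : ℤ)) * hZeq - hsq2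
          have hdvd : (2 : ℤ) ^ (T + 5) ∣ (M : ℤ) ^ (y + 1) - 1 := by
            rw [hD]
            refine dvd_sub (Dvd.dvd.mul_left ?_ _) (pow_dvd_pow 2 (by omega))
            exact pow_dvd_pow 2 hx5
          have hyk : y + 1 = 2 * (r + 1) := by omega
          have hgeom := geom_sum_mul ((M : ℤ) ^ 2) (r + 1)
          rw [← pow_mul, ← hyk] at hgeom
          have hW : (M : ℤ) = 2 * 2 ^ (T + 2) - 1 := by
            have h23 : (2 : ℤ) ^ (T + 3) = 2 * 2 ^ (T + 2) := by
              rw [pow_succ]; ring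
            linarith [hPZ]
          have hfac : (M : ℤ) ^ 2 - 1 = 2 ^ (T + 4) * (2 ^ (T + 2) - 1) := by
            have h2' : (2 : ℤ) ^ (T + 4) = 4 * 2 ^ (T + 2) := by
              rw [show T + 4 = T + 2 + 2 from by omega, pow_add]; ring
            linear_combination ((M : ℤ) + 2 * 2 ^ (T + 2) - 1) * hW - ((2 : ℤ) ^ (T + 2) - 1) * h2'
          have hdvd2 : (2 : ℤ) ∣ (∑ i ∈ Finset.range (r + 1), ((M : ℤ) ^ 2) ^ i) * (2 ^ (T + 2) - 1) := by
            have h25 : (2 : ℤ) ^ (T + 5) = 2 ^ (T + 4) * 2 := pow_succ 2 (T + 4)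
            have hd := hdvd
            rw [← hgeom, hfac, h25] at hd
            have h0 : (2 : ℤ) ^ (T + 4) ≠ 0 := by positivity
            rw [show (∑ i ∈ Finset.range (r + 1), ((M : ℤ) ^ 2) ^ i) * (2 ^ (T + 4) * (2 ^ (T + 2) - 1))
              = 2 ^ (T + 4) * ((∑ i ∈ Finset.range (r + 1), ((M : ℤ) ^ 2) ^ i) * (2 ^ (T + 2) - 1)) from by ring] at hd
            exact (mul_dvd_mul_iff_left h0).mp hd
          have hSeven : Even ((∑ i ∈ Finset.range (r + 1), ((M : ℤ) ^ 2) ^ i) * (2 ^ (T + 2) - 1)) := by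
            obtain ⟨w, hw⟩ := hdvd2
            exact ⟨w, by linarith⟩
          have hEodd : Odd ((2 : ℤ) ^ (T + 2) - 1) := by
            refine ⟨2 ^ (T + 1) - 1, ?_⟩
            have : (2 : ℤ) ^ (T + 2) = 2 ^ (T + 1) * 2 := pow_succ 2 (T + 1)
            linarith
          have hS : Even (∑ i ∈ Finset.range (r + 1), ((M : ℤ) ^ 2) ^ i) := by
            rcases Int.even_mul.mp hSeven with h' | h'
            · exact h'
            · exact absurd hEodd (Int.not_odd_iff_even.mpr h')
          have hk2 : 2 ∣ (r + 1) := by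
            have hcast2 : (((∑ i ∈ Finset.range (r + 1), ((M : ℤ) ^ 2) ^ i : ℤ)) : ZMod 2)
                = ((r + 1 : ℕ) : ZMod 2) := by
              push_cast
              have hM2 : ((M : ℕ) : ZMod 2) = 1 := by
                have hMo : M % 2 = 1 := by omega
                rw [← ZMod.natCast_mod, hMo]
                rfl
              rw [hM2]
              simp
            have h0 : (((∑ i ∈ Finset.range (r + 1), ((M : ℤ) ^ 2) ^ i : ℤ)) : ZMod 2) = 0 := by
              rw [ZMod.intCast_zmod_eq_zero_iff_dvd]
              obtain ⟨w, hw⟩ := hS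
              exact ⟨w, by push_cast; linarith⟩
            rw [h0] at hcast2
            exact (ZMod.natCast_eq_zero_iff (r + 1) 2).mp hcast2.symm
          obtain ⟨k', hk'⟩ := hk2
          have hy4 : y = 4 * (k' - 1) + 3 := by omega
          -- Step B : x is even
          have hxeven : Even x := by
            have hc3 := congrArg (fun n : ℕ => (n : ZMod 3)) hN
            push_cast at hc3
            have hM3 : ((M : ℕ) : ZMod 3) = 1 := by
              have hcc : ((M : ZMod 3)) + 1 = (2 : ZMod 3) ^ (T + 3) := by
                have := congrArg (fun n : ℕ => (n : ZMod 3)) hP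
                push_cast at this
                linear_combination this
              obtain ⟨a, ha⟩ := hTeven
              have h2 : (2 : ZMod 3) ^ (T + 3) = 2 := by
                rw [show T + 3 = 2 * (a + 1) + 1 from by omega, pow_succ, pow_mul]
                have h4 : (2 : ZMod 3) ^ 2 = 1 := by decide
                rw [h4, one_pow, one_mul]
              rw [h2] at hcc
              linear_combination hcc
            rw [hM3, one_pow] at hc3
            have hc3' : (2 : ZMod 3) ^ x = 1 := by
              rw [hc3]
              decide
            by_contra hodd
            rw [Nat.not_even_iff_odd] at hodd
            have h2 : (2 : ZMod 3) = -1 := by decide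
            rw [h2, hodd.neg_one_pow] at hc3'
            exact absurd hc3' (by decide)
          -- Step C : contradiction mod J = 2*Q*(Q-1)+1 with Q = 2^(T+2)
          obtain ⟨Q, hQ⟩ : ∃ Q : ℕ, Q = 2 ^ (T + 2) := ⟨_, rfl⟩
          have hQ4 : 4 ≤ Q := by
            rw [hQ]
            calc (4 : ℕ) = 2 ^ 2 := by norm_num
            _ ≤ 2 ^ (T + 2) := Nat.pow_le_pow_right (by norm_num) (by omega)
          have hMQ : M + 1 = 2 * Q := by
            have : (2 : ℕ) ^ (T + 3) = 2 * 2 ^ (T + 2) := by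
              rw [pow_succ]; ring
            omega
          obtain ⟨J, hJ⟩ : ∃ J : ℕ, J = 2 * (Q * (Q - 1)) + 1 := ⟨_, rfl⟩
          have hq12 : 12 ≤ Q * (Q - 1) := by
            calc (12 : ℕ) = 4 * 3 := by norm_num
            _ ≤ Q * (Q - 1) := Nat.mul_le_mul (by omega) (by omega)
          have hJ25 : 25 ≤ J := by omega
          haveI : NeZero J := ⟨by omega⟩
          have hq1 : Q * (Q - 1) + Q = Q * Q := by
            calc Q * (Q - 1) + Q = Q * ((Q - 1) + 1) := by ring
            _ = Q * Q := by rw [show Q - 1 + 1 = Q from by omega]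
          have hMJ : M + J = 2 * (Q * Q) := by omega
          have hMQZ : (M : ℤ) + 1 = 2 * (Q : ℤ) := by
            have := congrArg (fun n : ℕ => (n : ℤ)) hMQ
            push_cast at this
            linarith
          have hJZ' : (J : ℤ) = 2 * ((Q : ℤ) * ((Q : ℤ) - 1)) + 1 := by
            rw [hJ]
            push_cast [Nat.cast_sub (show 1 ≤ Q from by omega)]
            ring
          have hM2JZ : (M : ℤ) ^ 2 + 1 = 2 * (J : ℤ) := by
            linear_combination ((M : ℤ) + 2 * (Q : ℤ) - 1) * hMQZ - 2 * hJZ'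
          have hJMsq : ((M : ℕ) : ZMod J) ^ 2 = -1 := by
            have hcc := congrArg (fun n : ℤ => (n : ZMod J)) hM2JZ
            push_cast at hcc
            rw [ZMod.natCast_self] at hcc
            linear_combination hcc
          have hJ2pow : (2 : ZMod J) ^ (2 * T + 5) = ((M : ℕ) : ZMod J) := by
            have hcc := congrArg (fun n : ℕ => (n : ZMod J)) hMJ
            push_cast at hcc
            rw [ZMod.natCast_self] at hcc
            have hQc : ((Q : ℕ) : ZMod J) = (2 : ZMod J) ^ (T + 2) := by
              rw [hQ]; push_cast; ring
            rw [hQc] at hcc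
            rw [show 2 * T + 5 = T + 2 + (T + 2) + 1 from by omega, pow_add, pow_add, pow_one]
            linear_combination -hcc
          have hcastJ := congrArg (fun n : ℕ => (n : ZMod J)) hN
          push_cast at hcastJ
          rw [hy4] at hcastJ
          have hM4J : ((M : ℕ) : ZMod J) ^ 4 = 1 := by
            rw [show (4 : ℕ) = 2 * 2 from rfl, pow_mul, hJMsq, neg_one_sq]
          have hMyJ : ((M : ℕ) : ZMod J) ^ (4 * (k' - 1) + 3) = -((M : ℕ) : ZMod J) := by
            rw [pow_add, pow_mul, hM4J, one_pow, one_mul]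
            rw [show (3 : ℕ) = 2 + 1 from rfl, pow_add, hJMsq, pow_one]
            ring
          rw [hMyJ] at hcastJ
          have h2xJ : (2 : ZMod J) ^ x = 2 := by linear_combination hcastJ
          obtain ⟨n, hn⟩ := hxeven
          have hfin1 : ((2 : ZMod J) ^ x) ^ ((2 * T + 5) * 2) = ((2 : ZMod J) ^ ((2 * T + 5) * 2)) ^ x := by
            rw [← pow_mul, ← pow_mul, Nat.mul_comm]
          have hL : ((2 : ZMod J) ^ x) ^ ((2 * T + 5) * 2) = -1 := by
            rw [h2xJ, pow_mul, hJ2pow, hJMsq]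
          have hR : ((2 : ZMod J) ^ ((2 * T + 5) * 2)) ^ x = 1 := by
            rw [pow_mul, hJ2pow, hJMsq]
            exact Even.neg_one_pow ⟨n, hn⟩
          have hcontra : (-1 : ZMod J) = 1 := by rw [← hL, hfin1, hR]
          have h2z : ((2 : ℕ) : ZMod J) = 0 := by
            push_cast
            linear_combination -hcontra
          have hJd : J ∣ 2 := (ZMod.natCast_eq_zero_iff 2 J).mp h2z
          have := Nat.le_of_dvd (by norm_num) hJd
          omega
    · -- u = 1, v = 0 : M^y - 2^x = M + 2 : impossible
      simp only [pow_zero, pow_one, one_mul, neg_one_mul] at h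
      exfalso
      have hN : M ^ y = 2 ^ x + M + 2 := by
        have h2 : ((M ^ y : ℕ) : ℤ) = ((2 ^ x + M + 2 : ℕ) : ℤ) := by
          push_cast at h ⊢
          linarith
        exact_mod_cast h2
      rcases y with _ | s
      · have h0 : 0 < 2 ^ x := Nat.two_pow_pos x
        rw [pow_zero] at hN
        omega
      · have hMdvd : M ∣ 2 ^ x + 2 := by
          have h1 : M ∣ M ^ (s + 1) := dvd_pow_self M (Nat.succ_ne_zero s)
          rw [hN] at h1
          have hre : 2 ^ x + M + 2 = M + (2 ^ x + 2) := by ring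
          rw [hre] at h1
          exact (Nat.dvd_add_right (dvd_refl M)).mp h1
        rcases x with _ | b
        · have : M ≤ 3 := Nat.le_of_dvd (by norm_num) (by simpa using hMdvd)
          omega
        · have hModd : M ∣ 2 ^ b + 1 := by
            have h2 : 2 ^ (b + 1) + 2 = 2 * (2 ^ b + 1) := by
              rw [pow_succ]; ring
            rw [h2] at hMdvd
            have hcop : Nat.Coprime M 2 := by
              rw [Nat.Prime.coprime_iff_not_dvd hMp]
              intro hdd
              have := Nat.le_of_dvd (by norm_num) hdd
              omega
            exact hcop.dvd_of_dvd_mul_left hMdvd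
          haveI : NeZero M := ⟨by omega⟩
          have hb : ((2 : ZMod M)) ^ b = -1 := by
            have h0 : (((2 ^ b + 1 : ℕ)) : ZMod M) = 0 :=
              (ZMod.natCast_eq_zero_iff _ M).mpr hModd
            push_cast at h0
            linear_combination h0
          have h2T : (2 : ZMod M) ^ (T + 3) = 1 := by
            have hcc := congrArg (fun n : ℕ => (n : ZMod M)) hP
            push_cast at hcc
            rw [ZMod.natCast_self] at hcc
            linear_combination -hcc
          have hcontr : (1 : ZMod M) = -1 := by
            obtain ⟨a, ha⟩ := hTeven
            calc (1 : ZMod M) = (1 : ZMod M) ^ b := (one_pow b).symm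
            _ = ((2 : ZMod M) ^ (T + 3)) ^ b := by rw [h2T]
            _ = ((2 : ZMod M) ^ b) ^ (T + 3) := by rw [← pow_mul, ← pow_mul, Nat.mul_comm]
            _ = (-1 : ZMod M) ^ (T + 3) := by rw [hb]
            _ = -1 := by
                rw [show T + 3 = 2 * (a + 1) + 1 from by omega, pow_succ, pow_mul, neg_one_sq,
                  one_pow, one_mul]
          have h2z : ((2 : ℕ) : ZMod M) = 0 := by
            push_cast
            linear_combination hcontr
          have hMd : M ∣ 2 := (ZMod.natCast_eq_zero_iff 2 M).mp h2z
          have := Nat.le_of_dvd (by norm_num) hMd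
          omega
    · -- u = 1, v = 1 : impossible
      exfalso
      simp only [pow_one, neg_one_mul] at h
      push_cast at h
      have h1 : (0 : ℤ) < 2 ^ x := by positivity
      have hMpos : (0 : ℤ) < (M : ℤ) := by exact_mod_cast (by omega : 0 < M)
      have h2 : (0 : ℤ) < (M : ℤ) ^ y := pow_pos hMpos y
      linarith
  · intro h
    rcases h with h | h | h <;> simp only [Prod.mk.injEq] at h <;>
      obtain ⟨rfl, rfl, rfl, rfl⟩ := h
    · simp only [pow_zero, one_mul]
      push_cast
      linarith
    · simp only [pow_zero, pow_one, one_mul]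
      push_cast
      ring
    · simp only [pow_zero, pow_one, one_mul, neg_one_mul]
      push_cast
      have hps : (2 : ℤ) ^ (T + 3 + 1) = 2 ^ (T + 3) * 2 := pow_succ 2 (T + 3)
      linarith
end

section
/- Let M = 2^t - 1 > 3 be a Mersenne prime and c = 2M + 1. Then the only solutions (x, y, u, v) in nonnegative integers x, y and u, v ∈ {0,1} of (-1)^u 2^x + (-1)^v M^y = c are: 2^{t+1} - 1 = c, 2^t + M = c, and 2^{2t} - M^2 = c. -/
/-!
Write M = mersenne t; since M is prime, t is an odd prime, so M ≡ 3 (mod 4) and M ≡ 1 (mod 3).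
If both signs are negative there is nothing to do. In 2^x + M^y = c only y ≤ 1 fits by size,
and y = 0 fails mod 4. In M^y - 2^x = c we get M ∣ 2^x + 1 ∣ 2^(xt) + 1, while M ∣ 2^(xt) - 1,
so M ∣ 2. In 2^x - M^y = c, reducing mod 4 and mod 3 makes y and x even, and then
c = (2^(x/2) + M^(y/2)) (2^(x/2) - M^(y/2)) gives M^(y/2) ≤ c, so y ∈ {0, 2}.
-/

lemma Nat.add_le_of_sq_eq_add_sq {a b c : ℕ} (h : a ^ 2 = c + b ^ 2) (hc : 0 < c) :
    a + b ≤ c := by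
  have hba : b < a := by
    by_contra! hab
    nlinarith [Nat.pow_le_pow_left hab 2]
  nlinarith

lemma mersenne_dvd_two_of_dvd_two_pow_add_one {t x : ℕ} (ht : Odd t)
    (h : mersenne t ∣ 2 ^ x + 1) : mersenne t ∣ 2 := by
  have h₁ : mersenne t ∣ 2 ^ (x * t) + 1 := by
    rw [pow_mul]
    simpa using h.trans (ht.nat_add_dvd_pow_add_pow (2 ^ x) 1)
  have h₂ : mersenne t ∣ 2 ^ (x * t) - 1 := by
    rw [mul_comm, pow_mul]
    simpa [mersenne] using Nat.sub_dvd_pow_sub_pow (2 ^ t) 1 x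
  have h₃ := Nat.dvd_sub h₁ h₂
  have : 1 ≤ 2 ^ (x * t) := Nat.one_le_two_pow
  rwa [show 2 ^ (x * t) + 1 - (2 ^ (x * t) - 1) = 2 by omega] at h₃

lemma mersenne_pow_ne_add_two_pow {t : ℕ} (ht : Odd t) (ht2 : 2 ≤ t) (x y : ℕ) :
    mersenne t ^ y ≠ 2 * mersenne t + 1 + 2 ^ x := by
  intro h
  have h2x := Nat.one_le_two_pow (n := x)
  rcases y with _ | y
  · rw [pow_zero] at h
    omega
  · have hdvd : mersenne t ∣ 2 * mersenne t + (2 ^ x + 1) := by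
      rw [show 2 * mersenne t + (2 ^ x + 1) = mersenne t ^ (y + 1) by omega]
      exact dvd_pow_self _ y.succ_ne_zero
    have hdvd₂ := (Nat.dvd_add_right (dvd_mul_left _ _)).mp hdvd
    have := Nat.le_of_dvd two_pos (mersenne_dvd_two_of_dvd_two_pow_add_one ht hdvd₂)
    have := mersenne_mod_four ht2
    omega

lemma two_pow_add_mersenne_pow_eq_iff {t : ℕ} (ht : 2 ≤ t) (x y : ℕ) :
    2 ^ x + mersenne t ^ y = 2 * mersenne t + 1 ↔ x = t ∧ y = 1 := by
  have hM := mersenne_mod_four ht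
  refine ⟨fun h ↦ ?_, fun ⟨hx, hy⟩ ↦ by rw [hx, hy, ← succ_mersenne]; ring⟩
  rcases y with _ | _ | y
  · rw [pow_zero, add_left_inj] at h
    rcases Nat.lt_or_ge x 2 with hx | hx
    · have : 2 ^ x ≤ 2 ^ 1 := Nat.pow_le_pow_right two_pos (by omega)
      omega
    · have : 4 ∣ 2 ^ x := pow_dvd_pow 2 hx
      omega
  · rw [zero_add, pow_one] at h
    have : 2 ^ x = 2 ^ t := by have := succ_mersenne t; omega
    exact ⟨Nat.pow_right_injective le_rfl this, rfl⟩
  · have : mersenne t ^ 2 ≤ mersenne t ^ (y + 2) :=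
      Nat.pow_le_pow_right (by omega) (by omega)
    have : 3 ≤ mersenne t := by omega
    nlinarith [Nat.one_le_two_pow (n := x)]

lemma even_mersenne_exponent_of_two_pow_eq {t x y : ℕ} (ht : 2 ≤ t) (hx : 2 ≤ x)
    (h : 2 ^ x = 2 * mersenne t + 1 + mersenne t ^ y) : Even y := by
  have hM : (mersenne t : ZMod 4) = -1 := by
    rw [← ZMod.natCast_mod, mersenne_mod_four ht]; rfl
  have h2 : (2 : ZMod 4) ^ x = 0 := by
    obtain ⟨k, rfl⟩ := Nat.exists_eq_add_of_le hx
    rw [pow_add, show (2 : ZMod 4) ^ 2 = 0 by decide, zero_mul]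
  have h4 := congrArg (Nat.cast : ℕ → ZMod 4) h
  push_cast at h4
  rw [hM, h2] at h4
  by_contra hy
  rw [(Nat.not_even_iff_odd.mp hy).neg_one_pow] at h4
  revert h4; decide

lemma even_two_exponent_of_two_pow_eq {t x y : ℕ} (ht : Odd t) (ht3 : 3 ≤ t)
    (h : 2 ^ x = 2 * mersenne t + 1 + mersenne t ^ y) : Even x := by
  have hM : (mersenne t : ZMod 3) = 1 := by
    rw [← ZMod.natCast_mod, mersenne_mod_three ht ht3]; rfl
  have h3 := congrArg (Nat.cast : ℕ → ZMod 3) h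
  push_cast at h3
  rw [hM, one_pow, show (2 : ZMod 3) = -1 by decide] at h3
  by_contra hx
  rw [(Nat.not_even_iff_odd.mp hx).neg_one_pow] at h3
  revert h3; decide

lemma two_pow_eq_add_mersenne_pow_iff {t : ℕ} (ht : Odd t) (ht3 : 3 ≤ t) (x y : ℕ) :
    2 ^ x = 2 * mersenne t + 1 + mersenne t ^ y ↔ x = t + 1 ∧ y = 0 ∨ x = 2 * t ∧ y = 2 := by
  have hM := succ_mersenne t
  refine ⟨fun h ↦ ?_, ?_⟩
  · have hx : 2 ≤ x := by
      by_contra! hx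
      have : 2 ^ x ≤ 2 ^ 1 := Nat.pow_le_pow_right two_pos (by omega)
      have : 1 < mersenne t := one_lt_mersenne.mpr (by omega)
      omega
    obtain ⟨s, rfl⟩ := (even_mersenne_exponent_of_two_pow_eq (by omega) hx h).two_dvd
    obtain ⟨w, rfl⟩ := (even_two_exponent_of_two_pow_eq ht ht3 h).two_dvd
    have hs : s ≤ 1 := by
      have hsum : 2 ^ w + mersenne t ^ s ≤ 2 * mersenne t + 1 :=
        Nat.add_le_of_sq_eq_add_sq (by rw [← pow_mul, ← pow_mul, mul_comm w, mul_comm s, h])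
          (by omega)
      by_contra! hs
      have h3 : 3 ≤ mersenne t := by have := mersenne_mod_four (n := t) (by omega); omega
      have h₁ : mersenne t ^ 2 ≤ mersenne t ^ s := Nat.pow_le_pow_right (by omega) hs
      have h₂ : 3 * mersenne t ≤ mersenne t ^ 2 := by rw [sq]; exact Nat.mul_le_mul_right _ h3
      have := h₂.trans (h₁.trans (le_of_add_le_right hsum))
      omega
    interval_cases s
    · left
      refine ⟨Nat.pow_right_injective le_rfl (h.trans ?_), rfl⟩
      show _ = 2 ^ _
      rw [pow_succ, ← hM]; ring
    · right
      refine ⟨Nat.pow_right_injective le_rfl (h.trans ?_), rfl⟩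
      show _ = 2 ^ _
      rw [pow_mul' 2 2 t, ← hM]; ring
  · rintro (⟨rfl, rfl⟩ | ⟨rfl, rfl⟩)
    · rw [pow_succ, ← hM]; ring
    · rw [pow_mul' 2 2 t, ← hM]; ring

theorem mersenne_2Mplus1 (t M c : ℕ) (ht : 3 ≤ t) (hM : M = 2 ^ t - 1) (hMp : M.Prime)
    (hc : c = 2 * M + 1) (x y u v : ℕ) (hu : u ≤ 1) (hv : v ≤ 1) :
    (-1 : ℤ) ^ u * 2 ^ x + (-1 : ℤ) ^ v * (M : ℤ) ^ y = c ↔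
      (x, y, u, v) = (t + 1, 0, 0, 1) ∨ (x, y, u, v) = (t, 1, 0, 0) ∨
      (x, y, u, v) = (2 * t, 2, 0, 1) := by
  obtain rfl : M = mersenne t := hM
  have ht_odd : Odd t := hMp.of_mersenne.odd_of_ne_two (by omega)
  subst hc
  interval_cases u <;> interval_cases v <;>
    simp only [Int.reduceNeg, pow_zero, pow_one, one_mul, neg_mul, Nat.cast_add, Nat.cast_mul,
      Nat.cast_ofNat, Nat.cast_one, Prod.mk.injEq, zero_ne_one, one_ne_zero, and_false, and_true,
      and_self, or_false, false_or, or_self, iff_false, ne_eq]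
  · norm_cast
    exact two_pow_add_mersenne_pow_eq_iff (by omega) x y
  · rw [← sub_eq_add_neg, sub_eq_iff_eq_add]
    norm_cast
    exact two_pow_eq_add_mersenne_pow_iff ht_odd ht x y
  · rw [neg_add_eq_sub, sub_eq_iff_eq_add]
    exact_mod_cast mersenne_pow_ne_add_two_pow ht_odd (by omega) x y
  · intro h
    have : (0 : ℤ) < 2 ^ x + (mersenne t : ℤ) ^ y + (2 * mersenne t + 1) := by positivity
    linarith
end

section
/- Let F = 2^t + 1 > 5 be a Fermat prime and c = F - 2. Then the only solutions (x, y, u, v) in nonnegative integers x, y and u, v ∈ {0,1} of (-1)^u 2^x + (-1)^v F^y = c are: 2^t - 1 = c, -2 + F = c, and 2^{t+1} - F = c. -/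
private lemma binom_aux (m : ℤ) (y : ℕ) : (1 + m) ^ y ≡ 1 + y * m [ZMOD m ^ 2] := by
  induction y with
  | zero => simp
  | succ n ih =>
    have key : m ^ 2 ∣ (1 + ((n : ℤ) + 1) * m) - ((1 + n * m) * (1 + m)) :=
      ⟨-(n : ℤ), by ring⟩
    calc (1 + m) ^ (n + 1) = (1 + m) ^ n * (1 + m) := by ring
      _ ≡ (1 + n * m) * (1 + m) [ZMOD m ^ 2] := ih.mul_right _
      _ ≡ 1 + ((n : ℤ) + 1) * m [ZMOD m ^ 2] := Int.modEq_iff_dvd.mpr key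
      _ = 1 + ((n + 1 : ℕ) : ℤ) * m := by push_cast; ring

private lemma four_dvd_t (t F : ℕ) (ht : 4 ≤ t) (hF : F = 2 ^ t + 1) (hFp : F.Prime) :
    4 ∣ t := by
  have h16 : 16 ≤ 2 ^ t := by
    calc (16 : ℕ) = 2 ^ 4 := by norm_num
    _ ≤ 2 ^ t := Nat.pow_le_pow_right (by norm_num) ht
  have hteven : 2 ∣ t := by
    by_contra hodd
    obtain ⟨k, hk⟩ : ∃ k, t = 2 * k + 1 := ⟨t / 2, by omega⟩
    have h3 : (3 : ℕ) ∣ F := by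
      have hm : ((F : ℤ)) % 3 = 0 := by
        have hFe : (F : ℤ) = (2 : ℤ) ^ t + 1 := by rw [hF]; push_cast; ring
        rw [hFe, hk, pow_succ, pow_mul]
        have h4k : ((2 : ℤ) ^ 2) ^ k % 3 = 1 := by
          have : ((2 : ℤ) ^ 2) ^ k ≡ 1 ^ k [ZMOD 3] := Int.ModEq.pow k (by decide)
          simpa [Int.ModEq] using this
        omega
      exact_mod_cast Int.natCast_dvd_natCast.mp (Int.dvd_of_emod_eq_zero (by exact_mod_cast hm))
    have := (Nat.prime_dvd_prime_iff_eq (by norm_num) hFp).mp h3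
    omega
  by_contra h4
  obtain ⟨k, hk⟩ : ∃ k, t = 4 * k + 2 := ⟨t / 4, by omega⟩
  have h5 : (5 : ℕ) ∣ F := by
    have hm : ((F : ℤ)) % 5 = 0 := by
      have hFe : (F : ℤ) = (2 : ℤ) ^ t + 1 := by rw [hF]; push_cast; ring
      rw [hFe, hk, pow_add, pow_mul]
      have h16k : ((2 : ℤ) ^ 4) ^ k % 5 = 1 := by
        have : ((2 : ℤ) ^ 4) ^ k ≡ 1 ^ k [ZMOD 5] := Int.ModEq.pow k (by decide)
        simpa [Int.ModEq] using this
      have : (2 : ℤ) ^ 2 = 4 := by norm_num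
      rw [this]
      omega
    exact_mod_cast Int.natCast_dvd_natCast.mp (Int.dvd_of_emod_eq_zero (by exact_mod_cast hm))
  have := (Nat.prime_dvd_prime_iff_eq (by norm_num) hFp).mp h5
  omega

private lemma mod5_pow_eq (x y : ℕ) (h : (2 : ZMod 5) ^ x = 2 ^ y) : x % 4 = y % 4 := by
  have h24 : (2 : ZMod 5) ^ 4 = 1 := by decide
  have key : ∀ n : ℕ, (2 : ZMod 5) ^ n = 2 ^ (n % 4) := by
    intro n
    conv_lhs => rw [← Nat.div_add_mod n 4]
    rw [pow_add, pow_mul, h24, one_pow, one_mul]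
  rw [key x, key y] at h
  have hx := Nat.mod_lt x (show 0 < 4 by norm_num)
  have hy := Nat.mod_lt y (show 0 < 4 by norm_num)
  interval_cases hxv : x % 4 <;> interval_cases hyv : y % 4 <;>
    first | rfl | (exfalso; revert h; decide)

private lemma hard_case (t F : ℕ) (ht : 4 ≤ t) (hF : F = 2 ^ t + 1) (hFp : F.Prime)
    (x y : ℕ) (hy : 2 ≤ y) (heq : (2 : ℤ) ^ x = (F : ℤ) ^ y + 2 ^ t - 1) : False := by
  have h4t : 4 ∣ t := four_dvd_t t F ht hF hFp
  have hFZ : (F : ℤ) = 2 ^ t + 1 := by rw [hF]; push_cast; ring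
  have h16 : (16 : ℤ) ≤ 2 ^ t := by
    calc (16 : ℤ) = 2 ^ 4 := by norm_num
    _ ≤ 2 ^ t := pow_le_pow_right₀ (by norm_num) ht
  -- x ≥ t + 2
  have hxt : t + 2 ≤ x := by
    have hF2 : ((F : ℤ)) ^ 2 ≤ (F : ℤ) ^ y := pow_le_pow_right₀ (by rw [hFZ]; linarith) hy
    have h2t : (2 : ℤ) ^ (t + 2) ≤ 2 ^ x := by
      have e1 : (2 : ℤ) ^ (t + 2) = 2 ^ t * 4 := by ring
      have e2 : ((F : ℤ)) ^ 2 = (2 ^ t) * (2 ^ t) + 2 * 2 ^ t + 1 := by rw [hFZ]; ring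
      nlinarith [hF2]
    by_contra hcon
    have hle : x ≤ t + 1 := by omega
    have h1 : (2 : ℤ) ^ x ≤ 2 ^ (t + 1) := pow_le_pow_right₀ (by norm_num) hle
    have h2 : (2 : ℤ) ^ (t + 2) = 2 * 2 ^ (t + 1) := by ring
    have hp : (0 : ℤ) < 2 ^ (t + 1) := by positivity
    linarith
  -- y ≡ 3 mod 4
  have hy3 : y % 4 = 3 := by
    have hb : ((F : ℤ)) ^ y ≡ 1 + y * 2 ^ t [ZMOD (2 ^ t) ^ 2] := by
      have hbb := binom_aux ((2 : ℤ) ^ t) y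
      have e : (1 : ℤ) + 2 ^ t = (F : ℤ) := by rw [hFZ]; ring
      rwa [e] at hbb
    have hdvd : ((2 : ℤ) ^ (t + 2)) ∣ ((2 : ℤ) ^ t) ^ 2 := by
      rw [← pow_mul]
      exact pow_dvd_pow 2 (by omega)
    have hb2 : ((F : ℤ)) ^ y ≡ 1 + y * 2 ^ t [ZMOD 2 ^ (t + 2)] := hb.of_dvd hdvd
    have hx0 : (2 : ℤ) ^ x ≡ 0 [ZMOD 2 ^ (t + 2)] :=
      (Int.modEq_zero_iff_dvd).mpr (pow_dvd_pow 2 hxt)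
    have hcong : (0 : ℤ) ≡ (1 + y * 2 ^ t) + 2 ^ t - 1 [ZMOD 2 ^ (t + 2)] := by
      calc (0 : ℤ) ≡ 2 ^ x [ZMOD 2 ^ (t + 2)] := hx0.symm
        _ = (F : ℤ) ^ y + 2 ^ t - 1 := heq
        _ ≡ (1 + y * 2 ^ t) + 2 ^ t - 1 [ZMOD 2 ^ (t + 2)] := (hb2.add_right _).sub_right _
    have hdv : ((2 : ℤ) ^ (t + 2)) ∣ ((y : ℤ) + 1) * 2 ^ t := by
      have h' := Int.modEq_iff_dvd.mp hcong
      have e : ((1 : ℤ) + y * 2 ^ t) + 2 ^ t - 1 - 0 = ((y : ℤ) + 1) * 2 ^ t := by ring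
      rwa [e] at h'
    have h4y : (4 : ℤ) ∣ ((y : ℤ) + 1) := by
      have e : (2 : ℤ) ^ (t + 2) = 4 * 2 ^ t := by ring
      rw [e] at hdv
      obtain ⟨k, hk⟩ := hdv
      refine ⟨k, ?_⟩
      have h2t0 : (2 : ℤ) ^ t ≠ 0 := by positivity
      have : ((y : ℤ) + 1) * 2 ^ t = (4 * k) * 2 ^ t := by rw [hk]; ring
      exact mul_right_cancel₀ h2t0 this
    have : (4 : ℕ) ∣ (y + 1) := by exact_mod_cast h4y
    omega
  -- mod 5: x ≡ y mod 4
  have hx3 : x % 4 = 3 := by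
    obtain ⟨s, hs⟩ := h4t
    have h24 : (2 : ZMod 5) ^ 4 = 1 := by decide
    have h2t5 : (2 : ZMod 5) ^ t = 1 := by
      rw [hs, pow_mul, h24, one_pow]
    have hF5 : ((F : ℕ) : ZMod 5) = 2 := by
      rw [hF]; push_cast; rw [h2t5]; norm_num
    have h5 : (2 : ZMod 5) ^ x = 2 ^ y := by
      have hcast := congrArg (fun z : ℤ => (z : ZMod 5)) heq
      push_cast at hcast
      rw [hF5, h2t5] at hcast
      simpa using hcast
    rw [mod5_pow_eq x y h5]
    exact hy3
  -- mod F
  have hFgt : 17 ≤ F := by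
    have : (16 : ℕ) ≤ 2 ^ t := by
      calc (16 : ℕ) = 2 ^ 4 := by norm_num
      _ ≤ 2 ^ t := Nat.pow_le_pow_right (by norm_num) ht
    omega
  have h2tF : (2 : ZMod F) ^ t = -1 := by
    have h0 : ((2 ^ t + 1 : ℕ) : ZMod F) = 0 := by rw [← hF]; exact ZMod.natCast_self F
    push_cast at h0
    linear_combination h0
  have hxF : (2 : ZMod F) ^ x = -2 := by
    have hcast := congrArg (fun z : ℤ => (z : ZMod F)) heq
    push_cast at hcast
    rw [ZMod.natCast_self F, zero_pow (show y ≠ 0 by omega), h2tF] at hcast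
    rw [hcast]; ring
  haveI : Fact F.Prime := ⟨hFp⟩
  obtain ⟨n, hxn⟩ : ∃ n, x = t + 1 + n := ⟨x - t - 1, by omega⟩
  have h2n : (2 : ZMod F) ^ n = 1 := by
    have hsplit : (2 : ZMod F) ^ x = 2 ^ t * 2 * 2 ^ n := by rw [hxn, pow_add, pow_add]; ring
    rw [hxF, h2tF] at hsplit
    have hx' : (-2 : ZMod F) * 2 ^ n = (-2) * 1 := by linear_combination -hsplit
    have h2ne : (-2 : ZMod F) ≠ 0 := by
      intro h
      have h2 : ((2 : ℕ) : ZMod F) = 0 := by push_cast; linear_combination -h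
      have := Nat.le_of_dvd (by norm_num) ((ZMod.natCast_eq_zero_iff 2 F).mp h2)
      omega
    exact mul_left_cancel₀ h2ne hx'
  set d := orderOf (2 : ZMod F) with hd
  have hdn : d ∣ n := orderOf_dvd_of_pow_eq_one h2n
  have hd2t : d ∣ 2 * t := by
    apply orderOf_dvd_of_pow_eq_one
    rw [mul_comm, pow_mul, h2tF]; ring
  have hndt : ¬ d ∣ t := by
    intro hdt
    have h1 : (2 : ZMod F) ^ t = 1 := orderOf_dvd_iff_pow_eq_one.mp hdt
    rw [h2tF] at h1
    have h2 : ((2 : ℕ) : ZMod F) = 0 := by push_cast; linear_combination -h1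
    have := Nat.le_of_dvd (by norm_num) ((ZMod.natCast_eq_zero_iff 2 F).mp h2)
    omega
  have h8d : 8 ∣ d := by
    obtain ⟨k, hk⟩ := hd2t
    have hkodd : k % 2 = 1 := by
      rcases Nat.even_or_odd k with he | ho
      · exfalso
        obtain ⟨k', hk'⟩ := he
        refine hndt ⟨k', ?_⟩
        have h2 : 2 * t = 2 * (d * k') := by rw [hk, hk']; ring
        exact Nat.eq_of_mul_eq_mul_left (by norm_num) h2
      · exact Nat.odd_iff.mp ho
    have h8 : (8 : ℕ) ∣ d * k := by
      rw [← hk]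
      obtain ⟨s, hs⟩ := h4t
      exact ⟨s, by rw [hs]; ring⟩
    have hco : Nat.Coprime 8 k := by
      have h2k : Nat.Coprime 2 k := Nat.coprime_two_left.mpr (Nat.odd_iff.mpr hkodd)
      simpa using h2k.pow_left 3
    exact hco.dvd_of_dvd_mul_right h8
  have h4n : 4 ∣ n := dvd_trans (by norm_num) (dvd_trans h8d hdn)
  obtain ⟨a, ha⟩ := h4n
  obtain ⟨b, hb⟩ := h4t
  omega

theorem fermat_Fminus2 (t F c : ℕ) (ht : 4 ≤ t) (hF : F = 2 ^ t + 1) (hFp : F.Prime)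
    (hc : c = F - 2) (x y u v : ℕ) (hu : u ≤ 1) (hv : v ≤ 1) :
    (-1 : ℤ) ^ u * 2 ^ x + (-1 : ℤ) ^ v * (F : ℤ) ^ y = c ↔
      (x, y, u, v) = (t, 0, 0, 1) ∨ (x, y, u, v) = (1, 1, 1, 0) ∨
      (x, y, u, v) = (t + 1, 1, 0, 1) := by
  have h16 : (16 : ℕ) ≤ 2 ^ t := by
    calc (16 : ℕ) = 2 ^ 4 := by norm_num
    _ ≤ 2 ^ t := Nat.pow_le_pow_right (by norm_num) ht
  have hFZ : (F : ℤ) = 2 ^ t + 1 := by rw [hF]; push_cast; ring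
  have hcZ : (c : ℤ) = 2 ^ t - 1 := by
    have h2F : 2 ≤ F := by omega
    rw [hc]
    push_cast [Nat.cast_sub h2F]
    rw [hFZ]; ring
  have h16Z : (16 : ℤ) ≤ 2 ^ t := by exact_mod_cast h16
  constructor
  · intro heq
    rw [hcZ] at heq
    interval_cases u <;> interval_cases v <;>
      simp only [pow_zero, pow_one, one_mul, neg_mul, neg_one_mul] at heq
    · -- u = 0, v = 0
      exfalso
      rcases Nat.eq_zero_or_pos y with hy0 | hy1
      · subst hy0
        simp only [pow_zero] at heq
        have hx2 : 2 ≤ x := by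
          by_contra hx
          have hle : x ≤ 1 := by omega
          have : (2 : ℤ) ^ x ≤ 2 ^ 1 := pow_le_pow_right₀ (by norm_num) hle
          simp at this
          linarith
        have h4x : (4 : ℤ) ∣ 2 ^ x := by
          have h := pow_dvd_pow (2 : ℤ) hx2
          norm_num at h; exact h
        have h4t' : (4 : ℤ) ∣ 2 ^ t := by
          have h := pow_dvd_pow (2 : ℤ) (show 2 ≤ t by omega)
          norm_num at h; exact h
        omega
      · have hFy : (F : ℤ) ≤ (F : ℤ) ^ y := le_self_pow₀ (by rw [hFZ]; linarith) (by omega)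
        have hx0 : (0 : ℤ) < 2 ^ x := by positivity
        linarith [hFZ]
    · -- u = 0, v = 1
      have heq' : (2 : ℤ) ^ x = (F : ℤ) ^ y + 2 ^ t - 1 := by linarith
      rcases Nat.lt_or_ge y 2 with hy2 | hy2
      · interval_cases y
        · left
          simp only [pow_zero] at heq'
          have h1 : (2 : ℤ) ^ x = 2 ^ t := by linarith
          have h2 : (2 : ℕ) ^ x = 2 ^ t := by exact_mod_cast h1
          have := Nat.pow_right_injective (le_refl 2) h2
          simp [this]
        · right; right
          simp only [pow_one] at heq'
          rw [hFZ] at heq'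
          have h1 : (2 : ℤ) ^ x = 2 ^ (t + 1) := by rw [pow_succ]; linarith
          have h2 : (2 : ℕ) ^ x = 2 ^ (t + 1) := by exact_mod_cast h1
          have := Nat.pow_right_injective (le_refl 2) h2
          simp [this]
      · exact absurd heq' (fun h => hard_case t F ht hF hFp x y hy2 h)
    · -- u = 1, v = 0
      right; left
      have heq' : (F : ℤ) ^ y = 2 ^ x + 2 ^ t - 1 := by linarith
      have hmod : (2 : ℤ) ^ t ∣ (F : ℤ) ^ y - 1 := by
        have hd := sub_dvd_pow_sub_pow (F : ℤ) 1 y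
        have e : (F : ℤ) - 1 = 2 ^ t := by rw [hFZ]; ring
        rw [e, one_pow] at hd
        exact hd
      have hmod2 : (2 : ℤ) ^ t ∣ 2 ^ x - 2 := by
        have e : (2 : ℤ) ^ x - 2 = ((F : ℤ) ^ y - 1) - 2 ^ t := by rw [heq']; ring
        rw [e]
        exact dvd_sub hmod dvd_rfl
      have hx1 : x = 1 := by
        by_contra hx
        rcases Nat.lt_or_ge x 1 with h0 | h2
        · have hx0 : x = 0 := by omega
          subst hx0
          simp only [pow_zero] at hmod2
          have := Int.le_of_dvd (by norm_num) ((dvd_neg).mpr hmod2)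
          linarith
        · have hx2 : 2 ≤ x := by omega
          have h4x : (4 : ℤ) ∣ 2 ^ x := by
            have h := pow_dvd_pow (2 : ℤ) hx2
            norm_num at h; exact h
          have h4t' : (4 : ℤ) ∣ 2 ^ t := by
            have h := pow_dvd_pow (2 : ℤ) (show 2 ≤ t by omega)
            norm_num at h; exact h
          have h4 : (4 : ℤ) ∣ 2 ^ x - 2 := dvd_trans h4t' hmod2
          omega
      subst hx1
      have hFy : (F : ℕ) ^ y = F ^ 1 := by
        have : (F : ℤ) ^ y = (F : ℤ) ^ 1 := by rw [heq', hFZ]; ring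
        exact_mod_cast this
      have hy1 : y = 1 := Nat.pow_right_injective (by omega) hFy
      simp [hy1]
    · -- u = 1, v = 1
      exfalso
      have h1 : (0 : ℤ) < 2 ^ x := by positivity
      have h2 : (0 : ℤ) < (F : ℤ) ^ y := by
        apply pow_pos; rw [hFZ]; linarith
      linarith
  · intro h
    rcases h with h | h | h <;>
      (simp only [Prod.mk.injEq] at h; obtain ⟨h1, h2, h3, h4⟩ := h;
       subst h1; subst h2; subst h3; subst h4)
    · rw [hcZ]; ring
    · rw [hcZ, hFZ]; ring
    · rw [hcZ, hFZ]; ring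
end

section
/- Let F = 2^t + 1 > 5 be a Fermat prime and c = 2F - 1. Then the only solutions (x, y, u, v) in nonnegative integers x, y and u, v ∈ {0,1} of (-1)^u 2^x + (-1)^v F^y = c are: 2^{t+1} + 1 = c, 2^t + F = c, and -2^{2t} + F^2 = c. -/
lemma fermat_aux_pow_two_inj {a b : ℕ} (h : (2:ℤ)^a = (2:ℤ)^b) : a = b := by
  have h' : (2:ℕ)^a = 2^b := by exact_mod_cast h
  exact Nat.pow_right_injective (le_refl 2) h'

lemma fermat_aux_dvd (a : ℤ) : ∀ n : ℕ, a ^ 2 ∣ (1 + a) ^ n - (1 + n * a)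
  | 0 => by simp
  | n + 1 => by
    obtain ⟨k, hk⟩ := fermat_aux_dvd a n
    exact ⟨(1 + a) * k + n, by push_cast [pow_succ]; linear_combination (1 + a) * hk⟩

theorem fermat_2Fminus1 (t F c : ℕ) (ht : 4 ≤ t) (hF : F = 2 ^ t + 1) (hFp : F.Prime)
    (hc : c = 2 * F - 1) (x y u v : ℕ) (hu : u ≤ 1) (hv : v ≤ 1) :
    (-1 : ℤ) ^ u * 2 ^ x + (-1 : ℤ) ^ v * (F : ℤ) ^ y = c ↔
      (x, y, u, v) = (t + 1, 0, 0, 0) ∨ (x, y, u, v) = (t, 1, 0, 0) ∨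
      (x, y, u, v) = (2 * t, 2, 1, 0) := by
  have h2t : (16:ℕ) ≤ 2 ^ t := by
    calc (16:ℕ) = 2^4 := by norm_num
    _ ≤ 2^t := Nat.pow_le_pow_right (by norm_num) ht
  have hFZ : (F:ℤ) = 2^t + 1 := by rw [hF]; push_cast; ring
  have hcZ : (c:ℤ) = 2^(t+1) + 1 := by
    rw [hc, Nat.cast_sub (by omega : 1 ≤ 2*F)]
    push_cast [hFZ]; ring
  have ht2 : (0:ℤ) < 2^t := by positivity
  have h16 : (16:ℤ) ≤ 2^t := by exact_mod_cast h2t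
  have hps : (2:ℤ)^(t+1) = 2*2^t := by ring
  constructor
  · intro h
    rw [hFZ, hcZ] at h
    interval_cases u <;> interval_cases v <;>
      simp only [pow_zero, pow_one, one_mul, neg_one_mul] at h
    · -- u = 0, v = 0 : 2^x + (2^t+1)^y = 2^(t+1)+1
      rcases y with _ | _ | y
      · simp only [pow_zero] at h
        have hx : (2:ℤ)^x = 2^(t+1) := by linarith
        have := fermat_aux_pow_two_inj hx
        simp [Prod.mk.injEq, this]
      · rw [pow_one] at h
        have hx : (2:ℤ)^x = 2^t := by linarith
        have := fermat_aux_pow_two_inj hx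
        simp [Prod.mk.injEq, this]
      · exfalso
        have h1 : ((2:ℤ)^t+1)^2 ≤ (2^t+1)^(y+2) := by
          apply pow_le_pow_right₀ (by linarith) (by omega)
        have h2 : (0:ℤ) < 2^x := by positivity
        nlinarith [ht2]
    · -- u = 0, v = 1 : 2^x - (2^t+1)^y = 2^(t+1)+1
      exfalso
      have hFypos : (0:ℤ) < (2^t+1)^y := by positivity
      have hx2 : 2 ≤ x := by
        by_contra hxc; push_neg at hxc
        have : (2:ℤ)^x ≤ 2^1 := pow_le_pow_right₀ (by norm_num) (by omega)
        linarith
      have d1 : (4:ℤ) ∣ 2^x := by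
        have := pow_dvd_pow (2:ℤ) hx2; norm_num at this; exact this
      have d2 : (4:ℤ) ∣ 2^(t+1) := by
        have := pow_dvd_pow (2:ℤ) (show 2 ≤ t+1 by omega); norm_num at this; exact this
      have d3 : (4:ℤ) ∣ (2^t+1)^y - 1 := by
        have hd := sub_dvd_pow_sub_pow ((2:ℤ)^t+1) 1 y
        simp only [add_sub_cancel_right, one_pow] at hd
        refine dvd_trans ?_ hd
        have := pow_dvd_pow (2:ℤ) (show 2 ≤ t by omega); norm_num at this; exact this
      obtain ⟨k1,hk1⟩ := d1; obtain ⟨k2,hk2⟩ := d2; obtain ⟨k3,hk3⟩ := d3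
      have : (4:ℤ)*(k1 - k3 - k2) = 2 := by linarith
      omega
    · -- u = 1, v = 0 : -(2^x) + (2^t+1)^y = 2^(t+1)+1
      rcases Nat.lt_or_ge y 3 with hy | hy
      · interval_cases y
        · exfalso; simp only [pow_zero] at h
          linarith [pow_pos (show (0:ℤ) < 2 by norm_num) x]
        · exfalso; rw [pow_one] at h
          linarith [pow_pos (show (0:ℤ) < 2 by norm_num) x]
        · -- y = 2
          have e : (2:ℤ)^(2*t) = (2^t)^2 := by rw [mul_comm, pow_mul]
          have hx : (2:ℤ)^x = 2^(2*t) := by linear_combination -h - e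
          have := fermat_aux_pow_two_inj hx
          simp [Prod.mk.injEq, this]
      · -- y ≥ 3
        exfalso
        have hFy3 : ((2:ℤ)^t+1)^3 ≤ (2^t+1)^y := pow_le_pow_right₀ (by linarith) hy
        have hxlb : (2:ℤ)^(3*t) ≤ 2^x := by
          have e : (2:ℤ)^(3*t) = (2^t)^3 := by rw [mul_comm, pow_mul]
          nlinarith [ht2]
        have hx3t : 3*t ≤ x :=
          (Nat.pow_le_pow_iff_right (show 1 < 2 by norm_num)).mp
            (show (2:ℕ)^(3*t) ≤ 2^x by exact_mod_cast hxlb)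
        -- t is even
        have hteven : Even t := by
          by_contra hodd
          rw [Nat.not_even_iff_odd] at hodd
          have h3 : (3:ℤ) ∣ (F:ℤ) := by
            rw [hFZ]
            have hd := sub_dvd_pow_sub_pow (2:ℤ) (-1) t
            rw [hodd.neg_one_pow] at hd
            norm_num at hd
            exact hd
          have h3F : (3:ℕ) ∣ F := by exact_mod_cast h3
          have := (Nat.prime_dvd_prime_iff_eq (by norm_num) hFp).mp h3F
          omega
        -- y is even
        have hkey := fermat_aux_dvd ((2:ℤ)^t) y
        have e2 : ((2:ℤ)^t)^2 = 2^(2*t) := by rw [mul_comm, pow_mul]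
        rw [e2] at hkey
        have dA : (2:ℤ)^(t+2) ∣ (1+2^t)^y - (1+y*2^t) :=
          dvd_trans (pow_dvd_pow 2 (by omega)) hkey
        have dB : (2:ℤ)^(t+2) ∣ 2^x := pow_dvd_pow 2 (by omega)
        have dC : (2:ℤ)^(t+2) ∣ 2^t * (2 - y) := by
          have heq : (2:ℤ)^t*(2-(y:ℤ)) = ((1+2^t)^y - (1+y*2^t)) - 2^x := by
            linear_combination -h
          rw [heq]; exact dvd_sub dA dB
        have d4 : (4:ℤ) ∣ 2 - (y:ℤ) := by
          have e3 : (2:ℤ)^(t+2) = 2^t * 4 := by rw [pow_add]; norm_num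
          rw [e3] at dC
          exact (mul_dvd_mul_iff_left (pow_ne_zero t (two_ne_zero))).mp dC
        have hyeven : Even y := by
          obtain ⟨k, hk⟩ := d4
          have hyz : Even (y:ℤ) := ⟨1 - 2*k, by linarith⟩
          exact_mod_cast hyz
        -- x is even
        have h3c : (3:ℤ) ∣ 2^(t+1) + 1 := by
          have hd := sub_dvd_pow_sub_pow (2:ℤ) (-1) (t+1)
          rw [Odd.neg_one_pow (by exact hteven.add_one)] at hd
          norm_num at hd
          exact hd
        have h3F2 : (3:ℤ) ∣ (2^t+1) - (-1) := by
          have hd := sub_dvd_pow_sub_pow (2:ℤ) (-1) t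
          rw [hteven.neg_one_pow] at hd
          norm_num at hd
          obtain ⟨k, hk⟩ := hd
          exact ⟨k+1, by linarith⟩
        have h3Fy : (3:ℤ) ∣ (2^t+1)^y - (-1)^y :=
          dvd_trans h3F2 (sub_dvd_pow_sub_pow _ _ y)
        have h3x : (3:ℤ) ∣ 2^x - (-1)^x :=
          dvd_trans (by norm_num) (sub_dvd_pow_sub_pow 2 (-1) x)
        have hxeven : Even x := by
          rcases Nat.even_or_odd x with hx | hx
          · exact hx
          · exfalso
            rw [hx.neg_one_pow] at h3x
            rw [hyeven.neg_one_pow] at h3Fy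
            obtain ⟨k1, hk1⟩ := h3x; obtain ⟨k2, hk2⟩ := h3Fy; obtain ⟨k3, hk3⟩ := h3c
            have : (3:ℤ)*(k2 - k1 - k3) = -2 := by linarith
            omega
        obtain ⟨w, hw⟩ := hyeven
        obtain ⟨s, hs⟩ := hxeven
        subst hw hs
        have hwge2 : 2 ≤ w := by omega
        have hP2 : ((2:ℤ)^t+1)^2 ≤ (2^t+1)^w := pow_le_pow_right₀ (by linarith) hwge2
        have hQpos : (0:ℤ) < 2^s := by positivity
        have hPpos : (0:ℤ) < (2^t+1)^w := by positivity
        have hfac : (((2:ℤ)^t+1)^w - 2^s) * ((2^t+1)^w + 2^s) = 2^(t+1)+1 := by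
          have e1 : ((2:ℤ)^t+1)^(w+w) = ((2^t+1)^w)^2 := by rw [← pow_mul, mul_two]
          have e2' : (2:ℤ)^(s+s) = (2^s)^2 := by rw [← pow_mul, mul_two]
          linear_combination h - e1 + e2'
        have hApos : (0:ℤ) < (2^t+1)^w - 2^s := by
          rcases mul_pos_iff.mp (show (0:ℤ) < (((2:ℤ)^t+1)^w - 2^s) * ((2^t+1)^w + 2^s) by
            rw [hfac]; positivity) with ⟨h1, _⟩ | ⟨_, h2⟩
          · exact h1
          · linarith
        have hA1 : (1:ℤ) ≤ (2^t+1)^w - 2^s := hApos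
        nlinarith [hP2, hQpos, hA1, hfac, mul_pos ht2 ht2]
    · -- u = 1, v = 1
      exfalso
      have h1 : (0:ℤ) < 2^x := by positivity
      have h2 : (0:ℤ) < (2^t+1)^y := by positivity
      have h3 : (0:ℤ) < 2^(t+1) := by positivity
      linarith
  · rintro (hs | hs | hs) <;> simp only [Prod.mk.injEq] at hs <;>
      obtain ⟨rfl, rfl, rfl, rfl⟩ := hs
    · rw [hcZ]; norm_num
    · rw [hcZ, hFZ]; norm_num; ring
    · rw [hcZ, hFZ]
      have e : (2:ℤ)^(2*t) = (2^t)^2 := by rw [mul_comm, pow_mul]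
      norm_num
      linear_combination -e
end

section
/- There do not exist an odd prime p, an odd prime q distinct from p, and positive integers x1, y2, x3, y3 and a positive integer c such that simultaneously p^{x1} + 1 = c, 1 + c = q^{y2}, and q^{y3} + c = p^{x3}, with both x3 and y3 odd. -/
private lemma legendre_congr {p : ℕ} [Fact p.Prime] {a b : ℤ}
    (h : ((a : ZMod p) : ZMod p) = (b : ZMod p)) : legendreSym p a = legendreSym p b := by
  unfold legendreSym
  rw [h]

private lemma legendre_pow {p : ℕ} [Fact p.Prime] (a : ℤ) (n : ℕ) :
    legendreSym p (a ^ n) = (legendreSym p a) ^ n := by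
  induction n with
  | zero => simp [legendreSym.at_one]
  | succ n ih => rw [pow_succ, pow_succ, legendreSym.mul, ih]

theorem case12_incompatibility :
    ¬ ∃ (p q c x₁ y₂ x₃ y₃ : ℕ), p.Prime ∧ Odd p ∧ q.Prime ∧ Odd q ∧ p ≠ q ∧
      0 < c ∧ 0 < x₁ ∧ 0 < y₂ ∧ 0 < x₃ ∧ 0 < y₃ ∧ Odd x₃ ∧ Odd y₃ ∧
      p ^ x₁ + 1 = c ∧ 1 + c = q ^ y₂ ∧ q ^ y₃ + c = p ^ x₃ := by
  rintro ⟨p, q, c, x₁, y₂, x₃, y₃, hp, hpodd, hq, hqodd, hpq, hc, hx₁, hy₂, hx₃, hy₃,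
    hox, hoy, e1, e2, e3⟩
  haveI : Fact p.Prime := ⟨hp⟩
  haveI : Fact q.Prime := ⟨hq⟩
  have hp2 : p % 2 = 1 := Nat.odd_iff.mp hpodd
  have hq2 : q % 2 = 1 := Nat.odd_iff.mp hqodd
  have hpne2 : p ≠ 2 := by omega
  have hqne2 : q ≠ 2 := by omega
  -- c ≡ 1 mod p
  have hcp : ((c : ℤ) : ZMod p) = 1 := by
    have h : ((c : ℤ) : ZMod p) = ((p : ZMod p)) ^ x₁ + 1 := by
      rw [← e1]; push_cast; ring
    rw [h, ZMod.natCast_self, zero_pow hx₁.ne', zero_add]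
  -- c ≡ -1 mod q
  have hcq : ((c : ℤ) : ZMod q) = -1 := by
    have h : (1 : ZMod q) + ((c : ℤ) : ZMod q) = ((q : ZMod q)) ^ y₂ := by
      have h0 := congrArg (Nat.cast : ℕ → ZMod q) e2; push_cast at h0 ⊢; linear_combination h0
    rw [ZMod.natCast_self, zero_pow hy₂.ne'] at h
    linear_combination h
  -- q^y₃ ≡ -1 mod p
  have hqy : legendreSym p ((q : ℤ) ^ y₃) = legendreSym p (-1) := by
    apply legendre_congr
    have h : (((q : ℤ) ^ y₃ : ℤ) : ZMod p) = ((p : ZMod p)) ^ x₃ - ((c : ℤ) : ZMod p) := by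
      have h0 := congrArg (Nat.cast : ℕ → ZMod p) e3; push_cast at h0 ⊢; linear_combination h0
    rw [ZMod.natCast_self, zero_pow hx₃.ne', hcp] at h
    rw [h]; push_cast; ring
  -- p^x₃ ≡ -1 mod q
  have hpx : legendreSym q ((p : ℤ) ^ x₃) = legendreSym q (-1) := by
    apply legendre_congr
    have h : (((p : ℤ) ^ x₃ : ℤ) : ZMod q) = ((q : ZMod q)) ^ y₃ + ((c : ℤ) : ZMod q) := by
      have h0 := congrArg (Nat.cast : ℕ → ZMod q) e3; push_cast at h0 ⊢; linear_combination -h0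
    rw [ZMod.natCast_self, zero_pow hy₃.ne', hcq] at h
    rw [h]; push_cast; ring
  -- nonvanishing
  have hqne0 : (((q : ℤ) : ZMod p)) ≠ 0 := by
    rw [Int.cast_natCast, Ne, ZMod.natCast_eq_zero_iff]
    intro hdvd
    exact hpq ((Nat.prime_dvd_prime_iff_eq hp hq).mp hdvd)
  have hpne0 : (((p : ℤ) : ZMod q)) ≠ 0 := by
    rw [Int.cast_natCast, Ne, ZMod.natCast_eq_zero_iff]
    intro hdvd
    exact hpq ((Nat.prime_dvd_prime_iff_eq hq hp).mp hdvd).symm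
  -- odd powers collapse
  have hA : legendreSym p (q : ℤ) = legendreSym p (-1) := by
    rw [← hqy, legendre_pow]
    rcases legendreSym.eq_one_or_neg_one p hqne0 with h | h <;> rw [h]
    · rw [one_pow]
    · rw [hoy.neg_one_pow]
  have hB : legendreSym q (p : ℤ) = legendreSym q (-1) := by
    rw [← hpx, legendre_pow]
    rcases legendreSym.eq_one_or_neg_one q hpne0 with h | h <;> rw [h]
    · rw [one_pow]
    · rw [hox.neg_one_pow]
  -- evaluate at -1
  have hAv : legendreSym p (-1) = (-1 : ℤ) ^ (p / 2) := by
    rw [legendreSym.at_neg_one hpne2, ZMod.χ₄_eq_neg_one_pow hp2]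
  have hBv : legendreSym q (-1) = (-1 : ℤ) ^ (q / 2) := by
    rw [legendreSym.at_neg_one hqne2, ZMod.χ₄_eq_neg_one_pow hq2]
  -- quadratic reciprocity
  have hQR := legendreSym.quadratic_reciprocity hpne2 hqne2 hpq
  rw [hA, hB, hAv, hBv] at hQR
  -- not both p ≡ 1 and q ≡ 1 mod 4
  have hmod4 : ¬ (p % 4 = 1 ∧ q % 4 = 1) := by
    rintro ⟨hp4, hq4⟩
    have h1 : p ^ x₁ % 4 = 1 := by rw [Nat.pow_mod, hp4, one_pow]; decide
    have h2 : q ^ y₂ % 4 = 1 := by rw [Nat.pow_mod, hq4, one_pow]; decide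
    omega
  have hpar : (p / 2) % 2 = 1 ∨ (q / 2) % 2 = 1 := by omega
  -- final parity contradiction
  rcases Nat.even_or_odd (p / 2) with ha | ha <;>
    rcases Nat.even_or_odd (q / 2) with hb | hb
  · rcases hpar with h | h
    · exact absurd (Nat.even_iff.mp ha) (by omega)
    · exact absurd (Nat.even_iff.mp hb) (by omega)
  · rw [ha.neg_one_pow, hb.neg_one_pow, (ha.mul_right _).neg_one_pow] at hQR
    norm_num at hQR
  · rw [ha.neg_one_pow, hb.neg_one_pow, (hb.mul_left _).neg_one_pow] at hQR
    norm_num at hQR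
  · rw [ha.neg_one_pow, hb.neg_one_pow, (ha.mul hb).neg_one_pow] at hQR
    norm_num at hQR
end
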